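/- arXiv:2507.20603 — 4 statements merged into one kernel-verified Lean document; each statement's English description precedes it below -/
import Mathlib

section
/- Weighted Poincaré inequality: for every u ∈ Dom_{r,w} and every choice of points x_i ∈ I_{a_i,b_i} with |x_i| = (a_i+b_i)/2 (i = 1,…,N_η), one has Σ_{i=1}^{N_η} (ω_d^{p−1} / (b_i^{d−1}(b_i − a_i))) ∫_{I_{a_i,b_i}} |u(ζ) − u(x_i)|^p (ŵ_p(ζ))^{p−1} dζ ≤ ∫_{I_{Ω,w}} |∇u(y)|^p w(y) dy. -/
open MeasureTheory Set Filter Topology Metric Function Classical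
open scoped ENNReal RealInnerProductSpace

noncomputable section

/-- The ambient Euclidean space `ℝ^d`. -/
abbrev Eucl (d : ℕ) : Type := EuclideanSpace ℝ (Fin d)

/-- `ω_d`: the `(d-1)`-dimensional Hausdorff measure of the unit sphere of `ℝ^d`. -/
noncomputable def omegaD (d : ℕ) : ℝ :=
  ((MeasureTheory.Measure.hausdorffMeasure ((d : ℝ) - 1) : MeasureTheory.Measure (Eucl d))
    (Metric.sphere (0 : Eucl d) 1)).toReal

/-- `s ↦ f(s)^{-1/(p-1)}`, valued in `ℝ≥0∞` (so that `0 ↦ ∞`). -/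
noncomputable def rpw (p : ℝ) (f : ℝ → ℝ) (s : ℝ) : ℝ≥0∞ :=
  ENNReal.ofReal (f s) ^ (-(1 : ℝ) / (p - 1))

/-- `I_{p, supp θ}`: the largest open subset of `(a,b)` on which `θ^{-1/(p-1)}` is locally
integrable. -/
def degSet (p : ℝ) (θ : ℝ → ℝ) (a b : ℝ) : Set ℝ :=
  {r | r ∈ Set.Ioo a b ∧ ∃ ε > 0, Set.Ioo (r - ε) (r + ε) ⊆ Set.Ioo a b ∧
    (∫⁻ s in Set.Ioo (r - ε) (r + ε), rpw p θ s) < ⊤}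

/-- `I_{Ω,w} = {x ∈ Ω : |x| ∈ I_{p, supp η}}`. -/
def IOmega (d : ℕ) (p : ℝ) (η : ℝ → ℝ) (a b : ℝ) (Ω : Set (Eucl d)) : Set (Eucl d) :=
  {x ∈ Ω | ‖x‖ ∈ degSet p η a b}

/-- The annulus `I_{α,β}` relative to a set `S`: `{x ∈ S : α < |x| < β}`. -/
def ann (d : ℕ) (S : Set (Eucl d)) (α β : ℝ) : Set (Eucl d) :=
  {x ∈ S | α < ‖x‖ ∧ ‖x‖ < β}

/-- The auxiliary one-dimensional weight `η̂_p` on the interval `(ai, bi)`; the values at the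
endpoints `ai`, `bi` (defined in the paper as one-sided limits) are realised through the
convention `(+∞)⁻¹ = 0` in `ℝ≥0∞`, via monotone convergence. -/
noncomputable def etaHatI (d : ℕ) (p : ℝ) (η : ℝ → ℝ) (ai bi t : ℝ) : ℝ :=
  if t ≤ (3 * ai + bi) / 4 then
    ((∫⁻ s in Set.Ioo t ((ai + bi) / 2), rpw p (fun s => s ^ ((d : ℝ) - 1) * η s) s)⁻¹).toReal
  else if t ≤ (ai + 3 * bi) / 4 then
    min ((∫⁻ s in Set.Ioo ((3 * ai + bi) / 4) ((ai + bi) / 2),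
          rpw p (fun s => s ^ ((d : ℝ) - 1) * η s) s)⁻¹).toReal
        ((∫⁻ s in Set.Ioo ((ai + bi) / 2) ((ai + 3 * bi) / 4),
          rpw p (fun s => s ^ ((d : ℝ) - 1) * η s) s)⁻¹).toReal
  else
    ((∫⁻ s in Set.Ioo ((ai + bi) / 2) t, rpw p (fun s => s ^ ((d : ℝ) - 1) * η s) s)⁻¹).toReal

/-- `v ∈ W^{1,1}_loc(I)` (one variable) with derivative `g`, through the locally absolutely
continuous (continuous) representative. -/
def IsW11loc (v g : ℝ → ℝ) (I : Set ℝ) : Prop :=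
  ∀ r ∈ I, ∃ ε > 0, Set.Icc (r - ε) (r + ε) ⊆ I ∧
    MeasureTheory.IntegrableOn g (Set.Icc (r - ε) (r + ε)) ∧
    ∀ x ∈ Set.Icc (r - ε) (r + ε), v x = v (r - ε) + ∫ t in (r - ε)..x, g t

/-- The one-dimensional weighted energy `∫_I r^{d-1} |g(r)|^p η(r) dr`. -/
noncomputable def energy1D (d : ℕ) (p : ℝ) (η g : ℝ → ℝ) (I : Set ℝ) : ℝ≥0∞ :=
  ∫⁻ r in I, ENNReal.ofReal (r ^ ((d : ℝ) - 1) * |g r| ^ p * η r)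

/-- The multi-dimensional radial weighted energy `∫_S |g(|x|)|^p η(|x|) dx`
(i.e. `∫_S |∇u|^p w dx` for a radial `u` with profile derivative `g`). -/
noncomputable def energyRad (d : ℕ) (p : ℝ) (η g : ℝ → ℝ) (S : Set (Eucl d)) : ℝ≥0∞ :=
  ∫⁻ x in S, ENNReal.ofReal (|g ‖x‖| ^ p * η ‖x‖)

/-- Membership in `Dom_{r,w}`, with explicit radial profile `v` and profile derivative `g`. -/
def MemDomR (d : ℕ) (p : ℝ) (η : ℝ → ℝ) (a b : ℝ) (Ω : Set (Eucl d))
    (u : Eucl d → ℝ) (v g : ℝ → ℝ) : Prop :=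
  Measurable u ∧ IsW11loc v g (degSet p η a b) ∧
    energy1D d p η g (degSet p η a b) < ⊤ ∧ ∀ x ∈ Ω, u x = v ‖x‖

/-- The distance of `X = L^p(Ω, (ŵ_p)^{p-1} dx)`. -/
noncomputable def lpDist (d : ℕ) (p : ℝ) (wt : Eucl d → ℝ) (Ω : Set (Eucl d))
    (u₁ u₂ : Eucl d → ℝ) : ℝ≥0∞ :=
  (∫⁻ x in Ω, ENNReal.ofReal (|u₁ x - u₂ x| ^ p * wt x ^ (p - 1))) ^ (1 / p)

/-- Membership in `X = L^p(Ω, (ŵ_p)^{p-1} dx)`. -/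
def MemX (d : ℕ) (p : ℝ) (wt : Eucl d → ℝ) (Ω : Set (Eucl d)) (u : Eucl d → ℝ) : Prop :=
  Measurable u ∧ (∫⁻ x in Ω, ENNReal.ofReal (|u x| ^ p * wt x ^ (p - 1))) < ⊤

/-- Membership in `AC_r^d(Ω)`: `u` is measurable and coincides on `I_{Ω,w}` with `v(|·|)` for
some absolutely continuous `v` on `supp η ⊆ [a,b]`. -/
def MemACrd (d : ℕ) (p : ℝ) (η : ℝ → ℝ) (a b : ℝ) (Ω : Set (Eucl d)) (u : Eucl d → ℝ) : Prop :=
  Measurable u ∧ ∃ v g : ℝ → ℝ, MeasureTheory.IntegrableOn g (Set.Icc a b) ∧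
    (∀ t ∈ Set.Icc a b, v t = v a + ∫ s in a..t, g s) ∧
    ∀ x ∈ IOmega d p η a b Ω, u x = v ‖x‖

/-- The degenerate functional `F`. -/
noncomputable def Ffunc (d : ℕ) (p : ℝ) (η : ℝ → ℝ) (a b : ℝ) (Ω : Set (Eucl d))
    (u : Eucl d → ℝ) : ℝ≥0∞ :=
  if MemACrd d p η a b Ω u then
    ∫⁻ x in Ω, ENNReal.ofReal (‖fderiv ℝ u x‖ ^ p * η ‖x‖) else ⊤

/-- The lower semicontinuous envelope of `F` with respect to the convergence induced by the
distance `dst` (the sequential relaxation). -/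
noncomputable def relaxed (d : ℕ) (F : (Eucl d → ℝ) → ℝ≥0∞)
    (dst : (Eucl d → ℝ) → (Eucl d → ℝ) → ℝ≥0∞) (u : Eucl d → ℝ) : ℝ≥0∞ :=
  ⨅ (uh : ℕ → Eucl d → ℝ)
    (_ : Filter.Tendsto (fun h => dst (uh h) u) Filter.atTop (nhds 0)),
      Filter.liminf (fun h => F (uh h)) Filter.atTop

/-- `G` is the weak (distributional) gradient of `u` on the open set `U`, and both are locally
integrable on `U`: the weak formulation of `u ∈ W^{1,1}_loc(U)` with `∇u = G`. -/
def HasWeakGradOn (d : ℕ) (u : Eucl d → ℝ) (G : Eucl d → Eucl d) (U : Set (Eucl d)) : Prop :=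
  MeasureTheory.LocallyIntegrableOn u U ∧
  MeasureTheory.LocallyIntegrableOn (fun x => ‖G x‖) U ∧
  ∀ φ : Eucl d → ℝ, ContDiff ℝ (⊤ : ℕ∞) φ → HasCompactSupport φ → tsupport φ ⊆ U →
    ∀ y : Eucl d, ∫ x in U, u x * fderiv ℝ φ x y = - ∫ x in U, (inner ℝ (G x) y : ℝ) * φ x

/-- The oscillation of `u` on a set `s`. -/
noncomputable def oscOn (d : ℕ) (u : Eucl d → ℝ) (s : Set (Eucl d)) : ℝ :=
  sSup {r | ∃ x ∈ s, ∃ y ∈ s, r = |u x - u y|}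

/-- `u` is `d`-absolutely continuous on `G` (Malý). -/
def IsACd (d : ℕ) (u : Eucl d → ℝ) (G : Set (Eucl d)) : Prop :=
  ∀ ε > (0 : ℝ), ∃ δ > (0 : ℝ), ∀ (n : ℕ) (c : Fin n → Eucl d) (r : Fin n → ℝ),
    (∀ j, 0 < r j) → (∀ j, Metric.closedBall (c j) (r j) ⊆ G) →
    Pairwise (Function.onFun Disjoint fun j => Metric.closedBall (c j) (r j)) →
    (∑ j, (MeasureTheory.volume (Metric.closedBall (c j) (r j))).toReal) ≤ δ →
    (∑ j, oscOn d u (Metric.closedBall (c j) (r j)) ^ d) < ε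

lemma pp_mul_inv_le_one (J : ℝ≥0∞) : J * J⁻¹ ≤ 1 := by
  rcases eq_or_ne J 0 with h | h
  · simp [h]
  rcases eq_or_ne J ⊤ with h' | h'
  · simp [h']
  rw [ENNReal.mul_inv_cancel h h']

lemma pp_pow_sub_le {A B : ℝ} (d : ℕ) (hd : 1 ≤ d) (hA : 0 ≤ A) (hAB : A ≤ B) :
    B ^ d - A ^ d ≤ (d : ℝ) * B ^ (d - 1) * (B - A) := by
  have hB : 0 ≤ B := hA.trans hAB
  have h1 : (B ^ d - A ^ d : ℝ) = (∑ i ∈ Finset.range d, B ^ i * A ^ (d - 1 - i)) * (B - A) :=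
    (geom_sum₂_mul B A d).symm
  rw [h1]
  have h2 : (∑ i ∈ Finset.range d, B ^ i * A ^ (d - 1 - i)) ≤ (d : ℝ) * B ^ (d - 1) := by
    calc (∑ i ∈ Finset.range d, B ^ i * A ^ (d - 1 - i))
        ≤ ∑ i ∈ Finset.range d, B ^ (d - 1) := by
          refine Finset.sum_le_sum fun i hi => ?_
          have hi' : i ≤ d - 1 := Nat.le_sub_one_of_lt (Finset.mem_range.mp hi)
          calc B ^ i * A ^ (d - 1 - i) ≤ B ^ i * B ^ (d - 1 - i) := by
                refine mul_le_mul_of_nonneg_left (pow_le_pow_left₀ hA hAB _) (pow_nonneg hB _)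
            _ = B ^ (d - 1) := by rw [← pow_add]; congr 1; omega
      _ = (d : ℝ) * B ^ (d - 1) := by
          rw [Finset.sum_const, Finset.card_range, nsmul_eq_mul]
  exact mul_le_mul_of_nonneg_right h2 (by linarith)

lemma pp_rpow_eq_pow {B : ℝ} (hB : 0 ≤ B) {d : ℕ} (hd : 1 ≤ d) :
    B ^ ((d : ℝ) - 1) = B ^ (d - 1) := by
  rw [show ((d : ℝ) - 1) = ((d - 1 : ℕ) : ℝ) by
    rw [Nat.cast_sub hd]; norm_num, Real.rpow_natCast]

lemma pp_preimage_Ioc (d : ℕ) (s t : ℝ) :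
    (fun x : Eucl d => ‖x‖) ⁻¹' (Set.Ioc s t) = closedBall (0 : Eucl d) t \ closedBall 0 s := by
  ext x
  simp only [mem_preimage, mem_Ioc, mem_diff, mem_closedBall, dist_zero_right, not_le]
  tauto

lemma pp_finrank (d : ℕ) : Module.finrank ℝ (Eucl d) = d := by
  simp [finrank_euclideanSpace]

/-- key 1-d computation -/

lemma pp_lint_rpow (d : ℕ) (hd : 1 ≤ d) (c : ℝ) (hc : 0 ≤ c) {s t : ℝ} (hs : 0 ≤ s) (hst : s ≤ t) :
    ∫⁻ r in Set.Ioc s t, ENNReal.ofReal ((d : ℝ) * c * r ^ ((d : ℝ) - 1)) =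
      ENNReal.ofReal (c * (t ^ d - s ^ d)) := by
  have hd1 : (0 : ℝ) ≤ (d : ℝ) - 1 := by
    have : (1 : ℝ) ≤ (d : ℝ) := by exact_mod_cast hd
    linarith
  have hInt : IntervalIntegrable (fun r : ℝ => (d : ℝ) * c * r ^ ((d : ℝ) - 1)) volume s t :=
    (intervalIntegral.intervalIntegrable_rpow (Or.inl hd1)).const_mul _
  have hIntOn : IntegrableOn (fun r : ℝ => (d : ℝ) * c * r ^ ((d : ℝ) - 1)) (Set.Ioc s t) :=
    (intervalIntegrable_iff_integrableOn_Ioc_of_le hst).mp hInt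
  rw [← ofReal_integral_eq_lintegral_ofReal hIntOn ?_]
  · congr 1
    rw [← intervalIntegral.integral_of_le hst, intervalIntegral.integral_const_mul,
      integral_rpow (Or.inl (by linarith))]
    have : (d : ℝ) - 1 + 1 = (d : ℝ) := by ring
    rw [this, Real.rpow_natCast, Real.rpow_natCast]
    have hd0 : (d : ℝ) ≠ 0 := by exact_mod_cast Nat.one_le_iff_ne_zero.mp hd
    field_simp
  · refine (ae_restrict_iff' measurableSet_Ioc).mpr (ae_of_all _ fun r hr => ?_)
    have hr0 : 0 ≤ r := hs.trans hr.1.le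
    positivity

lemma pp_map_norm (d : ℕ) (hd : 1 ≤ d) :
    (volume : Measure (Eucl d)).map (fun x => ‖x‖) =
      volume.withDensity (fun r => Set.indicator (Set.Ioi (0 : ℝ))
        (fun r => ENNReal.ofReal
          ((d : ℝ) * (volume (ball (0 : Eucl d) 1)).toReal * r ^ ((d : ℝ) - 1))) r) := by
  set v₁ := (volume (ball (0 : Eucl d) 1)).toReal with hv₁
  have hv₁0 : 0 ≤ v₁ := ENNReal.toReal_nonneg
  have hvfin : volume (ball (0 : Eucl d) 1) ≠ ⊤ := measure_ball_lt_top.ne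
  have hv : volume (ball (0 : Eucl d) 1) = ENNReal.ofReal v₁ := (ENNReal.ofReal_toReal hvfin).symm
  have hloc : IsLocallyFiniteMeasure ((volume : Measure (Eucl d)).map (fun x => ‖x‖)) := by
    constructor
    intro x
    refine ⟨Set.Ioo (x - 1) (x + 1), Ioo_mem_nhds (by linarith) (by linarith), ?_⟩
    rw [Measure.map_apply measurable_norm measurableSet_Ioo]
    refine lt_of_le_of_lt (measure_mono fun y hy => ?_) (measure_closedBall_lt_top (x := (0 : Eucl d)) (r := x + 1))
    simp only [mem_preimage, mem_Ioo] at hy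
    simpa [mem_closedBall, dist_zero_right] using hy.2.le
  refine Measure.ext_of_Ioc _ _ fun s t hst => ?_
  rw [Measure.map_apply measurable_norm measurableSet_Ioc, pp_preimage_Ioc,
    withDensity_apply _ measurableSet_Ioc]
  have hsplit : ∫⁻ r in Set.Ioc s t, Set.indicator (Set.Ioi (0 : ℝ))
      (fun r => ENNReal.ofReal ((d : ℝ) * v₁ * r ^ ((d : ℝ) - 1))) r =
      ∫⁻ r in Set.Ioc (max s 0) t, ENNReal.ofReal ((d : ℝ) * v₁ * r ^ ((d : ℝ) - 1)) := by
    have hset : Set.Ioi (0 : ℝ) ∩ Set.Ioc s t = Set.Ioc (max s 0) t := by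
      ext r
      simp only [mem_inter_iff, mem_Ioi, mem_Ioc, max_lt_iff]
      tauto
    rw [lintegral_indicator measurableSet_Ioi, Measure.restrict_restrict measurableSet_Ioi, hset]
  rw [hsplit]
  rcases le_or_gt 0 s with hs0 | hs0
  · -- 0 ≤ s < t
    rw [max_eq_left hs0, pp_lint_rpow d hd v₁ hv₁0 hs0 hst.le]
    have ht0 : 0 ≤ t := hs0.trans hst.le
    rw [measure_diff (closedBall_subset_closedBall hst.le)
        measurableSet_closedBall.nullMeasurableSet measure_closedBall_lt_top.ne,
      Measure.addHaar_closedBall _ _ ht0, Measure.addHaar_closedBall _ _ hs0, pp_finrank, hv,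
      ← ENNReal.ofReal_mul (by positivity), ← ENNReal.ofReal_mul (by positivity),
      ← ENNReal.ofReal_sub _ (by positivity)]
    congr 1
    ring
  · rcases le_or_gt 0 t with ht0 | ht0
    · -- s < 0 ≤ t
      rw [max_eq_right hs0.le, pp_lint_rpow d hd v₁ hv₁0 le_rfl ht0]
      rw [closedBall_eq_empty.mpr hs0, diff_empty, Measure.addHaar_closedBall _ _ ht0, pp_finrank,
        hv, ← ENNReal.ofReal_mul (by positivity)]
      congr 1
      rw [zero_pow (Nat.one_le_iff_ne_zero.mp hd)]
      ring
    · -- t < 0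
      rw [closedBall_eq_empty.mpr ht0, empty_diff, measure_empty]
      rw [Set.Ioc_eq_empty (by intro h; exact absurd (lt_of_le_of_lt (le_max_right s 0) h) ht0.asymm)]
      simp

lemma pp_polar (d : ℕ) (hd : 1 ≤ d) {A B : ℝ} (hA : 0 ≤ A)
    {f : ℝ → ℝ≥0∞} (hf : AEMeasurable f (volume.restrict (Set.Ioo A B))) :
    ∫⁻ x in (fun x : Eucl d => ‖x‖) ⁻¹' (Set.Ioo A B), f ‖x‖ =
      ∫⁻ r in Set.Ioo A B,
        ENNReal.ofReal ((d : ℝ) * (volume (ball (0 : Eucl d) 1)).toReal * r ^ ((d : ℝ) - 1))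
          * f r := by
  set D : ℝ → ℝ≥0∞ := fun r => Set.indicator (Set.Ioi (0 : ℝ))
    (fun r => ENNReal.ofReal
      ((d : ℝ) * (volume (ball (0 : Eucl d) 1)).toReal * r ^ ((d : ℝ) - 1))) r with hD
  have hDm : Measurable D := by
    refine Measurable.indicator ?_ measurableSet_Ioi
    exact ENNReal.measurable_ofReal.comp
      (measurable_const.mul ((Real.continuous_rpow_const (by
        have : (1:ℝ) ≤ (d:ℝ) := by exact_mod_cast hd
        linarith)).measurable))
  have hmap : ((volume : Measure (Eucl d)).map (fun x => ‖x‖)).restrict (Set.Ioo A B)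
      = (volume.restrict (Set.Ioo A B)).withDensity D := by
    rw [pp_map_norm d hd, restrict_withDensity measurableSet_Ioo]
  have hf' : AEMeasurable f (((volume : Measure (Eucl d)).map (fun x => ‖x‖)).restrict (Set.Ioo A B)) := by
    rw [hmap]
    exact hf.mono_ac (withDensity_absolutelyContinuous _ _)
  have h1 : ∫⁻ x in (fun x : Eucl d => ‖x‖) ⁻¹' (Set.Ioo A B), f ‖x‖ =
      ∫⁻ r in Set.Ioo A B, f r ∂((volume : Measure (Eucl d)).map (fun x => ‖x‖)) := by
    have hrm : (Measure.map (fun x : Eucl d => ‖x‖) volume).restrict (Set.Ioo A B) =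
        Measure.map (fun x : Eucl d => ‖x‖)
          (volume.restrict ((fun x : Eucl d => ‖x‖) ⁻¹' (Set.Ioo A B))) :=
      Measure.restrict_map measurable_norm measurableSet_Ioo
    rw [hrm]
    exact (lintegral_map' (hrm ▸ hf') measurable_norm.aemeasurable).symm
  rw [h1, hmap, lintegral_withDensity_eq_lintegral_mul₀' hDm.aemeasurable (hmap ▸ hf')]
  refine setLIntegral_congr_fun measurableSet_Ioo (fun r hr => ?_)
  simp only [Pi.mul_apply, hD, Set.indicator_of_mem (show r ∈ Set.Ioi (0:ℝ) from lt_of_le_of_lt hA hr.1)]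

lemma pp_vol_ann (d : ℕ) (hd : 1 ≤ d) {A B : ℝ} (hA : 0 ≤ A) (hAB : A < B) :
    volume ((fun x : Eucl d => ‖x‖) ⁻¹' (Set.Ioo A B)) ≤
      ENNReal.ofReal ((d : ℝ) * (volume (ball (0 : Eucl d) 1)).toReal *
        (B ^ ((d : ℝ) - 1) * (B - A))) := by
  have hB : 0 ≤ B := hA.trans hAB.le
  set v₁ := (volume (ball (0 : Eucl d) 1)).toReal with hv₁
  have hv₁0 : 0 ≤ v₁ := ENNReal.toReal_nonneg
  have hvfin : volume (ball (0 : Eucl d) 1) ≠ ⊤ := measure_ball_lt_top.ne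
  have hv : volume (ball (0 : Eucl d) 1) = ENNReal.ofReal v₁ := (ENNReal.ofReal_toReal hvfin).symm
  calc volume ((fun x : Eucl d => ‖x‖) ⁻¹' (Set.Ioo A B))
      ≤ volume (closedBall (0 : Eucl d) B \ closedBall 0 A) := by
        refine measure_mono fun x hx => ?_
        simp only [mem_preimage, mem_Ioo] at hx
        simp only [mem_diff, mem_closedBall, dist_zero_right, not_le]
        exact ⟨hx.2.le, hx.1⟩
    _ = ENNReal.ofReal (B ^ d * v₁) - ENNReal.ofReal (A ^ d * v₁) := by
        rw [measure_diff (closedBall_subset_closedBall hAB.le)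
          measurableSet_closedBall.nullMeasurableSet measure_closedBall_lt_top.ne,
          Measure.addHaar_closedBall _ _ hB, Measure.addHaar_closedBall _ _ hA,
          show Module.finrank ℝ (Eucl d) = d by simp [finrank_euclideanSpace], hv,
          ← ENNReal.ofReal_mul (by positivity), ← ENNReal.ofReal_mul (by positivity)]
    _ = ENNReal.ofReal ((B ^ d - A ^ d) * v₁) := by
        rw [← ENNReal.ofReal_sub _ (by positivity)]
        congr 1
        ring
    _ ≤ _ := by
        refine ENNReal.ofReal_le_ofReal ?_
        have h2 := pp_pow_sub_le d hd hA hAB.le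
        have h3 : B ^ ((d : ℝ) - 1) = B ^ (d - 1) := pp_rpow_eq_pow hB hd
        rw [h3]
        nlinarith [pow_nonneg hB (d-1), mul_nonneg (mul_nonneg (Nat.cast_nonneg d : (0:ℝ) ≤ d) (pow_nonneg hB (d-1))) (sub_nonneg.mpr hAB.le)]

lemma pp_ftc_glue {v g : ℝ → ℝ} {I : Set ℝ} (h : IsW11loc v g I)
    {c e : ℝ} (hce : c ≤ e) (hsub : Set.Icc c e ⊆ I) :
    MeasureTheory.IntegrableOn g (Set.Icc c e) ∧
      ∀ x ∈ Set.Icc c e, v x = v c + ∫ t in c..x, g t := by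
  set T : Set ℝ := {x | x ∈ Set.Icc c e ∧ MeasureTheory.IntegrableOn g (Set.Icc c x) ∧
    ∀ y ∈ Set.Icc c x, v y = v c + ∫ t in c..y, g t} with hT
  have hcT : c ∈ T := by
    refine ⟨⟨le_rfl, hce⟩, ?_, ?_⟩
    · rw [Set.Icc_self, IntegrableOn,
        Measure.restrict_eq_zero.mpr (measure_singleton c)]
      exact integrable_zero_measure
    · intro y hy
      rw [Set.Icc_self, Set.mem_singleton_iff] at hy
      subst hy
      simp
  have hbdd : BddAbove T := ⟨e, fun x hx => hx.1.2⟩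
  have hne : T.Nonempty := ⟨c, hcT⟩
  set x₀ := sSup T with hx₀
  have hx₀c : c ≤ x₀ := le_csSup hbdd hcT
  have hx₀e : x₀ ≤ e := csSup_le hne fun x hx => hx.1.2
  obtain ⟨ε, hε, hIcc, hint, hrep⟩ := h x₀ (hsub ⟨hx₀c, hx₀e⟩)
  obtain ⟨t, htT, hlt⟩ : ∃ t ∈ T, x₀ - ε < t := exists_lt_of_lt_csSup hne (by linarith)
  have htx₀ : t ≤ x₀ := le_csSup hbdd htT
  have htc : c ≤ t := htT.1.1
  have hte : t ≤ e := htT.1.2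
  -- integrability of g on Icc c y for y ≤ min (x₀+ε) e
  have hIntCup : ∀ y : ℝ, y ≤ x₀ + ε → MeasureTheory.IntegrableOn g (Set.Icc c y) := by
    intro y hy
    have h1 : MeasureTheory.IntegrableOn g (Set.Icc t y) :=
      hint.mono_set (Set.Icc_subset_Icc hlt.le hy)
    refine (htT.2.1.union h1).mono_set fun z hz => ?_
    rcases le_total z t with hzt | htz
    · exact Set.mem_union_left _ ⟨hz.1, hzt⟩
    · exact Set.mem_union_right _ ⟨htz, hz.2⟩
  have key : ∀ y : ℝ, c ≤ y → y ≤ x₀ + ε → v y = v c + ∫ s in c..y, g s := by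
    intro y hcy hy
    rcases le_total y t with hyt | hty
    · exact htT.2.2 y ⟨hcy, hyt⟩
    · have hyI : y ∈ Set.Icc (x₀ - ε) (x₀ + ε) := ⟨hlt.le.trans hty, hy⟩
      have htI : t ∈ Set.Icc (x₀ - ε) (x₀ + ε) := ⟨hlt.le, by linarith⟩
      have h1 := hrep y hyI
      have h2 := hrep t htI
      have hii : ∀ z w : ℝ, x₀ - ε ≤ z → w ≤ x₀ + ε → z ≤ w →
          IntervalIntegrable g volume z w := by
        intro z w hz hw hzw
        refine (hint.mono_set ?_).intervalIntegrable
        rw [Set.uIcc_of_le hzw]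
        exact Set.Icc_subset_Icc hz hw
      have h3 : v y = v t + ∫ s in t..y, g s := by
        rw [h1, h2]
        have := intervalIntegral.integral_interval_sub_left
          (hii _ _ le_rfl hy (by linarith)) (hii _ _ le_rfl (by linarith) hlt.le)
        linarith [this]
      rw [h3, htT.2.2 t ⟨htc, le_rfl⟩]
      have hadd : (∫ s in c..t, g s) + ∫ s in t..y, g s = ∫ s in c..y, g s := by
        refine intervalIntegral.integral_add_adjacent_intervals ?_ ?_
        · refine htT.2.1.mono_set ?_ |>.intervalIntegrable
          rw [Set.uIcc_of_le htc]
        · exact hii t y hlt.le hy hty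
      linarith [hadd]
  have hx₁T : min (x₀ + ε) e ∈ T := by
    refine ⟨⟨le_min (by linarith) hce, min_le_right _ _⟩,
      hIntCup _ (min_le_left _ _), fun y hy => key y hy.1 (hy.2.trans (min_le_left _ _))⟩
  have hx₁le : min (x₀ + ε) e ≤ x₀ := le_csSup hbdd hx₁T
  have hex₀ : e ≤ x₀ := by
    by_contra hco
    push_neg at hco
    have hmin : x₀ < min (x₀ + ε) e := lt_min (by linarith) hco
    linarith
  have hx₀eq : x₀ = e := le_antisymm hx₀e hex₀
  have heT : e ∈ T := by
    have : min (x₀ + ε) e = e := min_eq_right (by linarith)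
    rwa [this] at hx₁T
  exact ⟨heT.2.1, heT.2.2⟩

lemma pp_etaHatI_nonneg (d : ℕ) (p : ℝ) (η : ℝ → ℝ) (ai bi t : ℝ) :
    0 ≤ etaHatI d p η ai bi t := by
  unfold etaHatI
  split_ifs
  · exact ENNReal.toReal_nonneg
  · exact le_min ENNReal.toReal_nonneg ENNReal.toReal_nonneg
  · exact ENNReal.toReal_nonneg

lemma pp_point_bound (d : ℕ) (hd : 1 ≤ d) (p : ℝ) (hp : 1 < p) (η v g : ℝ → ℝ)
    (hη0 : ∀ᵐ r ∂(volume : Measure ℝ), 0 ≤ η r) (hηm : AEMeasurable η (volume : Measure ℝ))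
    {A B : ℝ} (hA : 0 ≤ A) (hAB : A < B)
    (hglue : ∀ c e : ℝ, A < c → c ≤ e → e < B →
      MeasureTheory.IntegrableOn g (Set.Icc c e) ∧
        ∀ x ∈ Set.Icc c e, v x = v c + ∫ t in c..x, g t)
    {r : ℝ} (hr : r ∈ Set.Ioo A B) :
    ENNReal.ofReal (|v r - v ((A + B) / 2)| ^ p * etaHatI d p η A B r ^ (p - 1)) ≤
      ∫⁻ s in Set.Ioo A B, ENNReal.ofReal (s ^ ((d : ℝ) - 1) * |g s| ^ p * η s) := by
  have hp0 : (0 : ℝ) < p := lt_trans one_pos hp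
  have hp1 : (0 : ℝ) < p - 1 := by linarith
  set m : ℝ := (A + B) / 2 with hm
  have hAm : A < m := by rw [hm]; linarith
  have hmB : m < B := by rw [hm]; linarith
  set α : ℝ := min r m with hα
  set β : ℝ := max r m with hβ
  have hAα : A < α := lt_min hr.1 hAm
  have hβB : β < B := max_lt hr.2 hmB
  have hαβ : α ≤ β := min_le_max
  set W : ℝ → ℝ≥0∞ := fun s => ENNReal.ofReal (s ^ ((d : ℝ) - 1) * η s) with hW
  set J : ℝ≥0∞ := ∫⁻ s in Set.Ioo α β, rpw p (fun s => s ^ ((d : ℝ) - 1) * η s) s with hJdef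
  set E : ℝ≥0∞ := ∫⁻ s in Set.Ioo A B, ENNReal.ofReal (s ^ ((d : ℝ) - 1) * |g s| ^ p * η s)
    with hE
  -- Step A
  have hstepA : ENNReal.ofReal (etaHatI d p η A B r) ≤ J⁻¹ := by
    unfold etaHatI
    split_ifs with h1 h2
    · have hrm : r ≤ m := by rw [hm]; linarith
      have hJle : J ≤ ∫⁻ s in Set.Ioo r ((A + B) / 2),
          rpw p (fun s => s ^ ((d : ℝ) - 1) * η s) s := by
        rw [hJdef, hα, hβ, min_eq_left hrm, max_eq_right hrm, ← hm]
      exact le_trans ENNReal.ofReal_toReal_le (ENNReal.inv_le_inv' hJle)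
    · push_neg at h1
      rcases le_total r m with hrm | hmr
      · have hJle : J ≤ ∫⁻ s in Set.Ioo ((3 * A + B) / 4) ((A + B) / 2),
            rpw p (fun s => s ^ ((d : ℝ) - 1) * η s) s := by
          rw [hJdef, hα, hβ, min_eq_left hrm, max_eq_right hrm]
          exact lintegral_mono' (Measure.restrict_mono
            (Set.Ioo_subset_Ioo h1.le (le_of_eq hm.symm)) le_rfl) le_rfl
        calc ENNReal.ofReal (min _ _) ≤ ENNReal.ofReal _ :=
              ENNReal.ofReal_le_ofReal (min_le_left _ _)
          _ ≤ _ := le_trans ENNReal.ofReal_toReal_le (ENNReal.inv_le_inv' hJle)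
      · have hJle : J ≤ ∫⁻ s in Set.Ioo ((A + B) / 2) ((A + 3 * B) / 4),
            rpw p (fun s => s ^ ((d : ℝ) - 1) * η s) s := by
          rw [hJdef, hα, hβ, min_eq_right hmr, max_eq_left hmr]
          exact lintegral_mono' (Measure.restrict_mono
            (Set.Ioo_subset_Ioo (le_of_eq hm.symm) h2) le_rfl) le_rfl
        calc ENNReal.ofReal (min _ _) ≤ ENNReal.ofReal _ :=
              ENNReal.ofReal_le_ofReal (min_le_right _ _)
          _ ≤ _ := le_trans ENNReal.ofReal_toReal_le (ENNReal.inv_le_inv' hJle)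
    · push_neg at h2
      have hmr : m ≤ r := by rw [hm]; linarith
      have hJle : J ≤ ∫⁻ s in Set.Ioo ((A + B) / 2) r,
          rpw p (fun s => s ^ ((d : ℝ) - 1) * η s) s := by
        rw [hJdef, hα, hβ, min_eq_right hmr, max_eq_left hmr, ← hm]
      exact le_trans ENNReal.ofReal_toReal_le (ENNReal.inv_le_inv' hJle)
  by_cases hJtop : J = ⊤
  · have h0 : etaHatI d p η A B r = 0 := by
      have h1 := hstepA
      rw [hJtop, ENNReal.inv_top] at h1
      have h2 : etaHatI d p η A B r ≤ 0 :=
        ENNReal.ofReal_eq_zero.mp (le_antisymm h1 zero_le)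
      linarith [pp_etaHatI_nonneg d p η A B r]
    rw [h0, Real.zero_rpow (ne_of_gt hp1), mul_zero, ENNReal.ofReal_zero]
    exact zero_le
  -- main case
  obtain ⟨hint, hrep⟩ := hglue α β hAα hαβ hβB
  have hrmem : r ∈ Set.Icc α β := ⟨min_le_left _ _, le_max_left _ _⟩
  have hmmem : m ∈ Set.Icc α β := ⟨min_le_right _ _, le_max_right _ _⟩
  have hii : ∀ z ∈ Set.Icc α β, IntervalIntegrable g volume α z := by
    intro z hz
    refine (hint.mono_set ?_).intervalIntegrable
    rw [Set.uIcc_of_le hz.1]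
    exact Set.Icc_subset_Icc le_rfl hz.2
  have hvrm : v r - v m = ∫ t in m..r, g t := by
    have h1 := hrep r hrmem
    have h2 := hrep m hmmem
    have h3 := intervalIntegral.integral_interval_sub_left (hii r hrmem) (hii m hmmem)
    rw [h1, h2]
    linarith [h3]
  have habs : |v r - v m| ≤ ∫ t in Set.Ioc α β, |g t| := by
    rw [hvrm]
    have h4 : |∫ t in m..r, g t| = |∫ t in α..β, g t| := by
      rcases le_total m r with h | h
      · rw [hα, hβ, min_eq_right h, max_eq_left h]
      · rw [hα, hβ, min_eq_left h, max_eq_right h, intervalIntegral.integral_symm, abs_neg]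
    rw [h4, ← intervalIntegral.integral_of_le hαβ]
    calc |∫ t in α..β, g t| ≤ ∫ t in α..β, |g t| := by
          simpa [Real.norm_eq_abs] using
            intervalIntegral.norm_integral_le_integral_norm (f := g) (a := α) (b := β) hαβ
      _ = _ := rfl
  have hg1 : MeasureTheory.IntegrableOn (fun t => |g t|) (Set.Ioc α β) :=
    (hint.mono_set Set.Ioc_subset_Icc_self).abs
  have hrIoo : volume.restrict (Set.Ioo α β) = volume.restrict (Set.Ioc α β) :=
    Measure.restrict_congr_set Ioo_ae_eq_Ioc
  have hG : ENNReal.ofReal |v r - v m| ≤ ∫⁻ t in Set.Ioo α β, ENNReal.ofReal |g t| := by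
    refine (ENNReal.ofReal_le_ofReal habs).trans ?_
    rw [show (∫⁻ t in Set.Ioo α β, ENNReal.ofReal |g t|)
        = ∫⁻ t in Set.Ioc α β, ENNReal.ofReal |g t| from by rw [hrIoo],
      ← ofReal_integral_eq_lintegral_ofReal hg1 (ae_of_all _ fun t => abs_nonneg _)]
  -- Hölder
  set μ := volume.restrict (Set.Ioo α β) with hμdef
  have hWm : AEMeasurable W μ := by
    refine ENNReal.measurable_ofReal.comp_aemeasurable (AEMeasurable.mul ?_ hηm.restrict)
    have hd1 : (0:ℝ) ≤ (d:ℝ) - 1 := by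
      have : (1:ℝ) ≤ (d:ℝ) := by exact_mod_cast hd
      linarith
    exact (Real.continuous_rpow_const hd1).measurable.aemeasurable
  have hgae : AEMeasurable g μ :=
    hint.aestronglyMeasurable.aemeasurable.mono_measure
      (Measure.restrict_mono Set.Ioo_subset_Icc_self le_rfl)
  have hq := Real.HolderConjugate.conjExponent hp
  set q : ℝ := Real.conjExponent p with hqdef
  have hqval : q = p / (p - 1) := rfl
  have hppos : p ≠ 0 := ne_of_gt hp0
  have hp1ne : p - 1 ≠ 0 := ne_of_gt hp1
  set F : ℝ → ℝ≥0∞ := fun s => ENNReal.ofReal |g s| * W s ^ (1 / p) with hF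
  set G : ℝ → ℝ≥0∞ := fun s => W s ^ (-(1 : ℝ) / p) with hGdef
  have hJμ : (∫⁻ s, W s ^ (-(1 : ℝ) / (p - 1)) ∂μ) = J := rfl
  have hWae_ne : ∀ᵐ s ∂μ, W s ≠ 0 := by
    have hmeas : AEMeasurable (fun s => W s ^ (-(1 : ℝ) / (p - 1))) μ :=
      hWm.pow aemeasurable_const
    have hlt := ae_lt_top' hmeas (by rw [hJμ]; exact hJtop)
    filter_upwards [hlt] with s hs
    intro h0
    rw [h0, ENNReal.zero_rpow_of_neg (by
      apply div_neg_of_neg_of_pos <;> [norm_num; exact hp1])] at hs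
    exact absurd hs (lt_irrefl _)
  have hFG : (fun s => ENNReal.ofReal |g s|) =ᵐ[μ] F * G := by
    filter_upwards [hWae_ne] with s hs
    simp only [hF, hGdef, Pi.mul_apply]
    rw [mul_assoc, ← ENNReal.rpow_add _ _ hs ENNReal.ofReal_ne_top,
      show 1 / p + -(1 : ℝ) / p = 0 by ring, ENNReal.rpow_zero, mul_one]
  have hFm : AEMeasurable F μ :=
    (ENNReal.measurable_ofReal.comp_aemeasurable (continuous_abs.measurable.comp_aemeasurable hgae)).mul (hWm.pow aemeasurable_const)
  have hGm : AEMeasurable G μ := hWm.pow aemeasurable_const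
  have hHold := ENNReal.lintegral_mul_le_Lp_mul_Lq μ hq hFm hGm
  have hFp : (∫⁻ s, F s ^ p ∂μ) ≤ E := by
    have he : ∀ᵐ s ∂μ, F s ^ p = ENNReal.ofReal (s ^ ((d : ℝ) - 1) * |g s| ^ p * η s) := by
      have hs0 : ∀ᵐ s ∂μ, s ∈ Set.Ioo α β :=
        (ae_restrict_iff' measurableSet_Ioo).mpr (ae_of_all _ fun s hs => hs)
      filter_upwards [ae_restrict_of_ae hη0, hs0] with s hηs hsm
      have hspos : (0 : ℝ) < s := lt_of_le_of_lt (hA.trans hAα.le) hsm.1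
      simp only [hF]
      rw [ENNReal.mul_rpow_of_nonneg _ _ hp0.le, ← ENNReal.rpow_mul,
        one_div, inv_mul_cancel₀ hppos, ENNReal.rpow_one,
        ENNReal.ofReal_rpow_of_nonneg (abs_nonneg _) hp0.le, hW,
        ← ENNReal.ofReal_mul (by positivity)]
      congr 1
      ring
    rw [lintegral_congr_ae he, hE]
    exact lintegral_mono' (Measure.restrict_mono
      (Set.Ioo_subset_Ioo hAα.le hβB.le) le_rfl) le_rfl
  have hGq : (∫⁻ s, G s ^ q ∂μ) = J := by
    rw [← hJμ]
    refine lintegral_congr fun s => ?_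
    simp only [hGdef]
    rw [← ENNReal.rpow_mul]
    congr 1
    rw [hqval]
    field_simp
  have hΔ : ENNReal.ofReal |v r - v m| ≤ (∫⁻ s, F s ^ p ∂μ) ^ (1 / p) * J ^ (1 / q) := by
    refine hG.trans ?_
    have : (∫⁻ t in Set.Ioo α β, ENNReal.ofReal |g t|) = ∫⁻ s, (F * G) s ∂μ :=
      lintegral_congr_ae hFG
    rw [this]
    refine hHold.trans ?_
    rw [hGq]
  calc ENNReal.ofReal (|v r - v m| ^ p * etaHatI d p η A B r ^ (p - 1))
      = ENNReal.ofReal (|v r - v m| ^ p) * ENNReal.ofReal (etaHatI d p η A B r ^ (p - 1)) :=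
        ENNReal.ofReal_mul (by positivity)
    _ = (ENNReal.ofReal |v r - v m|) ^ p * (ENNReal.ofReal (etaHatI d p η A B r)) ^ (p - 1) := by
        rw [ENNReal.ofReal_rpow_of_nonneg (abs_nonneg _) hp0.le,
          ENNReal.ofReal_rpow_of_nonneg (pp_etaHatI_nonneg d p η A B r) hp1.le]
    _ ≤ (((∫⁻ s, F s ^ p ∂μ) ^ (1 / p) * J ^ (1 / q)) ^ p) * (J⁻¹) ^ (p - 1) :=
        mul_le_mul' (ENNReal.rpow_le_rpow hΔ hp0.le) (ENNReal.rpow_le_rpow hstepA hp1.le)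
    _ ≤ ((E ^ (1 / p) * J ^ (1 / q)) ^ p) * (J⁻¹) ^ (p - 1) := by
        refine mul_le_mul' (ENNReal.rpow_le_rpow (mul_le_mul'
          (ENNReal.rpow_le_rpow hFp (by positivity)) le_rfl) hp0.le) le_rfl
    _ = E * (J ^ (p - 1) * (J⁻¹) ^ (p - 1)) := by
        rw [ENNReal.mul_rpow_of_nonneg _ _ hp0.le, ← ENNReal.rpow_mul, ← ENNReal.rpow_mul,
          show 1 / p * p = 1 by field_simp,
          show 1 / q * p = p - 1 by rw [hqval]; field_simp,
          ENNReal.rpow_one, mul_assoc]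
    _ = E * (J * J⁻¹) ^ (p - 1) := by rw [ENNReal.mul_rpow_of_nonneg _ _ hp1.le]
    _ ≤ E * 1 := by
        refine mul_le_mul_right ?_ _
        calc (J * J⁻¹) ^ (p - 1) ≤ (1 : ℝ≥0∞) ^ (p - 1) :=
              ENNReal.rpow_le_rpow (pp_mul_inv_le_one J) hp1.le
          _ = 1 := ENNReal.one_rpow _
    _ = E := mul_one E

theorem statement_1
    (d : ℕ) (hd : 1 ≤ d) (p : ℝ) (hp : 1 < p)
    (a b : ℝ) (ha : 0 ≤ a) (hab : a < b)
    (Ω : Set (Eucl d))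
    (hΩ : Ω = {x : Eucl d | ‖x‖ < b} ∨ Ω = {x : Eucl d | a < ‖x‖ ∧ ‖x‖ < b})
    (η : ℝ → ℝ) (hη0 : ∀ᵐ r ∂(volume : Measure ℝ), 0 ≤ η r)
    (hη1 : MeasureTheory.LocallyIntegrable η)
    (hηsupp : Function.support η ⊆ Set.Ioo a b)
    (w : Eucl d → ℝ) (hw : ∀ x, w x = η ‖x‖)
    (ι : Type) [Countable ι] [Nonempty ι] (A B : ι → ℝ)
    (hABlt : ∀ i, A i < B i) (hABsub : ∀ i, a ≤ A i ∧ B i ≤ b)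
    (hdisj : Pairwise (Function.onFun Disjoint fun i => Set.Ioo (A i) (B i)))
    (hdec : degSet p η a b = ⋃ i, Set.Ioo (A i) (B i))
    (ηhat : ℝ → ℝ)
    (hηhat : ∀ i, ∀ t ∈ Set.Icc (A i) (B i), ηhat t = etaHatI d p η (A i) (B i) t)
    (hηhat0 : ∀ t ∉ ⋃ i, Set.Icc (A i) (B i), ηhat t = 0)
    (what : Eucl d → ℝ) (hwhat : ∀ x, what x = (omegaD d)⁻¹ * ηhat ‖x‖)
    (u : Eucl d → ℝ) (v g : ℝ → ℝ) (hu : MemDomR d p η a b Ω u v g)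
    (xpt : ι → Eucl d)
    (hxpt : ∀ i, xpt i ∈ IOmega d p η a b Ω ∧ ‖xpt i‖ = (A i + B i) / 2) :
    (∑' i : ι, ENNReal.ofReal (omegaD d ^ (p - 1) / (B i ^ ((d : ℝ) - 1) * (B i - A i))) *
        ∫⁻ ζ in ann d (IOmega d p η a b Ω) (A i) (B i),
          ENNReal.ofReal (|u ζ - u (xpt i)| ^ p * what ζ ^ (p - 1)))
      ≤ energyRad d p η g (IOmega d p η a b Ω) := by
  obtain ⟨humeas, hW11, henergy, huv⟩ := hu
  have hp0 : (0 : ℝ) < p := lt_trans one_pos hp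
  have hp1 : (0 : ℝ) < p - 1 := by linarith
  have hηhat_nonneg : ∀ t, 0 ≤ ηhat t := by
    intro t
    by_cases ht : t ∈ ⋃ i, Set.Icc (A i) (B i)
    · simp only [Set.mem_iUnion] at ht
      obtain ⟨i, hti⟩ := ht
      rw [hηhat i t hti]
      exact pp_etaHatI_nonneg d p η (A i) (B i) t
    · rw [hηhat0 t ht]
  have homega0 : (0 : ℝ) ≤ omegaD d := ENNReal.toReal_nonneg
  rcases eq_or_lt_of_le homega0 with hω | hωpos
  · -- degenerate case `ω_d = 0`: the auxiliary weight vanishes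
    have hz : ∀ i : ι,
        ENNReal.ofReal (omegaD d ^ (p - 1) / (B i ^ ((d : ℝ) - 1) * (B i - A i))) *
          (∫⁻ ζ in ann d (IOmega d p η a b Ω) (A i) (B i),
            ENNReal.ofReal (|u ζ - u (xpt i)| ^ p * what ζ ^ (p - 1))) = 0 := by
      intro i
      have hzero : ∀ ζ : Eucl d,
          ENNReal.ofReal (|u ζ - u (xpt i)| ^ p * what ζ ^ (p - 1)) = 0 := by
        intro ζ
        rw [hwhat ζ, ← hω, inv_zero, zero_mul, Real.zero_rpow (ne_of_gt hp1), mul_zero,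
          ENNReal.ofReal_zero]
      simp only [hzero, lintegral_zero, mul_zero]
    rw [tsum_congr hz, tsum_zero]
    exact zero_le
  -- main case `ω_d > 0`
  have hωne : omegaD d ≠ 0 := ne_of_gt hωpos
  set v₁ : ℝ := (volume (ball (0 : Eucl d) 1)).toReal with hv₁def
  have hv₁0 : 0 ≤ v₁ := ENNReal.toReal_nonneg
  have hηae : AEMeasurable η (volume : Measure ℝ) := hη1.aestronglyMeasurable.aemeasurable
  have hAi : ∀ i, 0 ≤ A i := fun i => ha.trans (hABsub i).1
  have hBpos : ∀ i, 0 < B i := fun i => lt_of_le_of_lt (hAi i) (hABlt i)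
  set S : ι → Set (Eucl d) := fun i => (fun x : Eucl d => ‖x‖) ⁻¹' (Set.Ioo (A i) (B i))
    with hSdef
  have hSmeas : ∀ i, MeasurableSet (S i) := fun i => measurable_norm measurableSet_Ioo
  have hsubdeg : ∀ i, Set.Ioo (A i) (B i) ⊆ degSet p η a b := by
    intro i
    rw [hdec]
    exact Set.subset_iUnion (fun i => Set.Ioo (A i) (B i)) i
  have hSΩ : ∀ i, S i ⊆ Ω := by
    intro i x hx
    simp only [hSdef, Set.mem_preimage, Set.mem_Ioo] at hx
    rcases hΩ with h | h <;> rw [h] <;> simp only [Set.mem_setOf_eq]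
    · exact lt_of_lt_of_le hx.2 (hABsub i).2
    · exact ⟨lt_of_le_of_lt (hABsub i).1 hx.1, lt_of_lt_of_le hx.2 (hABsub i).2⟩
  have hSIO : ∀ i, S i ⊆ IOmega d p η a b Ω := fun i x hx => ⟨hSΩ i hx, hsubdeg i hx⟩
  have hann : ∀ i, ann d (IOmega d p η a b Ω) (A i) (B i) = S i := by
    intro i
    ext x
    constructor
    · rintro ⟨hx1, hx2, hx3⟩
      exact ⟨hx2, hx3⟩
    · intro hx
      have hx' : ‖x‖ ∈ Set.Ioo (A i) (B i) := hx
      exact ⟨hSIO i hx, hx'.1, hx'.2⟩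
  have hglue : ∀ i, ∀ c e : ℝ, A i < c → c ≤ e → e < B i →
      MeasureTheory.IntegrableOn g (Set.Icc c e) ∧
        ∀ x ∈ Set.Icc c e, v x = v c + ∫ t in c..x, g t := by
    intro i c e hc hce he
    exact pp_ftc_glue hW11 hce ((Set.Icc_subset_Ioo hc he).trans (hsubdeg i))
  have hgm : ∀ i, AEMeasurable g (volume.restrict (Set.Ioo (A i) (B i))) := by
    intro i
    have hcover : Set.Ioo (A i) (B i) =
        ⋃ n : ℕ, Set.Icc (A i + (B i - A i) / ((n : ℝ) + 2))
          (B i - (B i - A i) / ((n : ℝ) + 2)) := by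
      ext x
      simp only [Set.mem_iUnion, Set.mem_Ioo, Set.mem_Icc]
      constructor
      · rintro ⟨h1, h2⟩
        obtain ⟨n, hn⟩ := exists_nat_gt
          (max ((B i - A i) / (x - A i)) ((B i - A i) / (B i - x)))
        have hxA : (0 : ℝ) < x - A i := by linarith
        have hBx : (0 : ℝ) < B i - x := by linarith
        refine ⟨n, ?_, ?_⟩
        · have h3 : (B i - A i) / (x - A i) < (n : ℝ) + 2 := by
            have := (le_max_left ((B i - A i) / (x - A i))
              ((B i - A i) / (B i - x))).trans_lt hn
            linarith
          rw [div_lt_iff₀ hxA] at h3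
          have h4 : (B i - A i) / ((n : ℝ) + 2) < x - A i := by
            rw [div_lt_iff₀ (by positivity)]
            nlinarith
          linarith
        · have h3 : (B i - A i) / (B i - x) < (n : ℝ) + 2 := by
            have := (le_max_right ((B i - A i) / (x - A i))
              ((B i - A i) / (B i - x))).trans_lt hn
            linarith
          rw [div_lt_iff₀ hBx] at h3
          have h4 : (B i - A i) / ((n : ℝ) + 2) < B i - x := by
            rw [div_lt_iff₀ (by positivity)]
            nlinarith
          linarith
      · rintro ⟨n, h1, h2⟩
        have hδ : (0 : ℝ) < (B i - A i) / ((n : ℝ) + 2) :=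
          div_pos (sub_pos.mpr (hABlt i)) (by positivity)
        constructor <;> linarith
    rw [hcover]
    refine aemeasurable_iUnion_iff.mpr fun n => ?_
    by_cases hce : A i + (B i - A i) / ((n : ℝ) + 2) ≤ B i - (B i - A i) / ((n : ℝ) + 2)
    · have hδ : (0 : ℝ) < (B i - A i) / ((n : ℝ) + 2) :=
        div_pos (sub_pos.mpr (hABlt i)) (by positivity)
      exact ((hglue i _ _ (by linarith) hce
        (by linarith)).1).aestronglyMeasurable.aemeasurable
    · rw [Set.Icc_eq_empty hce, Measure.restrict_empty]
      exact aemeasurable_zero_measure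
  have hpoint : ∀ i, ∀ r ∈ Set.Ioo (A i) (B i),
      ENNReal.ofReal (|v r - v ((A i + B i) / 2)| ^ p * ηhat r ^ (p - 1)) ≤
        ∫⁻ s in Set.Ioo (A i) (B i),
          ENNReal.ofReal (s ^ ((d : ℝ) - 1) * |g s| ^ p * η s) := by
    intro i r hrm
    have h := pp_point_bound d hd p hp η v g hη0 hηae (hAi i) (hABlt i) (hglue i) hrm
    rwa [hηhat i r (Set.mem_Icc_of_Ioo hrm)]
  have key : ∀ i : ι,
      ENNReal.ofReal (omegaD d ^ (p - 1) / (B i ^ ((d : ℝ) - 1) * (B i - A i))) *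
        (∫⁻ ζ in ann d (IOmega d p η a b Ω) (A i) (B i),
          ENNReal.ofReal (|u ζ - u (xpt i)| ^ p * what ζ ^ (p - 1))) ≤
      ∫⁻ x in S i, ENNReal.ofReal (|g ‖x‖| ^ p * η ‖x‖) := by
    intro i
    set Ebar : ℝ≥0∞ := ∫⁻ s in Set.Ioo (A i) (B i),
      ENNReal.ofReal (s ^ ((d : ℝ) - 1) * |g s| ^ p * η s) with hEbar
    set K : ℝ := B i ^ ((d : ℝ) - 1) * (B i - A i) with hK
    have hKpos : 0 < K :=
      mul_pos (Real.rpow_pos_of_pos (hBpos i) _) (sub_pos.mpr (hABlt i))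
    rw [hann i]
    have hm := (hxpt i).2
    have hxΩ : xpt i ∈ Ω := (hxpt i).1.1
    have hcong : (∫⁻ ζ in S i, ENNReal.ofReal (|u ζ - u (xpt i)| ^ p * what ζ ^ (p - 1))) =
        ∫⁻ ζ in S i, ENNReal.ofReal ((omegaD d)⁻¹ ^ (p - 1)) *
          ENNReal.ofReal (|v ‖ζ‖ - v ((A i + B i) / 2)| ^ p * ηhat ‖ζ‖ ^ (p - 1)) := by
      refine setLIntegral_congr_fun (hSmeas i) (fun ζ hζ => ?_)
      rw [huv ζ (hSΩ i hζ), huv (xpt i) hxΩ, hm, hwhat ζ,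
        Real.mul_rpow (inv_nonneg.mpr hωpos.le) (hηhat_nonneg ‖ζ‖),
        ← ENNReal.ofReal_mul (by positivity)]
      congr 1
      ring
    rw [hcong, lintegral_const_mul' _ _ ENNReal.ofReal_ne_top]
    have hbound : (∫⁻ ζ in S i,
        ENNReal.ofReal (|v ‖ζ‖ - v ((A i + B i) / 2)| ^ p * ηhat ‖ζ‖ ^ (p - 1))) ≤
        Ebar * volume (S i) := by
      calc (∫⁻ ζ in S i,
          ENNReal.ofReal (|v ‖ζ‖ - v ((A i + B i) / 2)| ^ p * ηhat ‖ζ‖ ^ (p - 1)))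
          ≤ ∫⁻ _ in S i, Ebar := by
            refine lintegral_mono_ae
              ((ae_restrict_iff' (hSmeas i)).mpr (ae_of_all _ fun ζ hζ => ?_))
            exact hpoint i ‖ζ‖ hζ
        _ = Ebar * volume (S i) := setLIntegral_const _ _
    have hfm : AEMeasurable (fun r => ENNReal.ofReal (|g r| ^ p * η r))
        (volume.restrict (Set.Ioo (A i) (B i))) := by
      refine ENNReal.measurable_ofReal.comp_aemeasurable (AEMeasurable.mul ?_ hηae.restrict)
      exact ((Real.continuous_rpow_const hp0.le).measurable).comp_aemeasurable
        (continuous_abs.measurable.comp_aemeasurable (hgm i))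
    have hpolar : (∫⁻ x in S i, ENNReal.ofReal (|g ‖x‖| ^ p * η ‖x‖)) =
        ENNReal.ofReal ((d : ℝ) * v₁) * Ebar := by
      rw [hSdef, pp_polar d hd (hAi i) hfm, hEbar,
        ← lintegral_const_mul' _ _ ENNReal.ofReal_ne_top]
      refine setLIntegral_congr_fun measurableSet_Ioo (fun r hrm => ?_)
      have hrpos : (0 : ℝ) < r := lt_of_le_of_lt (hAi i) hrm.1
      have hrp : (0 : ℝ) ≤ r ^ ((d : ℝ) - 1) := Real.rpow_nonneg hrpos.le _
      rw [← hv₁def, ← ENNReal.ofReal_mul (by positivity),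
        ← ENNReal.ofReal_mul (by positivity)]
      congr 1
      ring
    calc ENNReal.ofReal (omegaD d ^ (p - 1) / K) *
          (ENNReal.ofReal ((omegaD d)⁻¹ ^ (p - 1)) *
            (∫⁻ ζ in S i,
              ENNReal.ofReal (|v ‖ζ‖ - v ((A i + B i) / 2)| ^ p * ηhat ‖ζ‖ ^ (p - 1))))
        ≤ ENNReal.ofReal (omegaD d ^ (p - 1) / K) *
          (ENNReal.ofReal ((omegaD d)⁻¹ ^ (p - 1)) * (Ebar * volume (S i))) :=
          mul_le_mul_right (mul_le_mul_right hbound _) _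
      _ = ENNReal.ofReal (1 / K) * (Ebar * volume (S i)) := by
          rw [← mul_assoc, ← ENNReal.ofReal_mul (by positivity)]
          congr 2
          rw [div_mul_eq_mul_div, ← Real.mul_rpow hωpos.le (inv_nonneg.mpr hωpos.le),
            mul_inv_cancel₀ hωne, Real.one_rpow]
      _ ≤ ENNReal.ofReal (1 / K) * (Ebar * ENNReal.ofReal ((d : ℝ) * v₁ * K)) := by
          refine mul_le_mul_right (mul_le_mul_right ?_ _) _
          rw [hSdef, hK, hv₁def]
          exact pp_vol_ann d hd (hAi i) (hABlt i)
      _ = ENNReal.ofReal ((d : ℝ) * v₁) * Ebar := by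
          rw [mul_comm Ebar, ← mul_assoc, ← ENNReal.ofReal_mul (by positivity)]
          congr 2
          field_simp
      _ = ∫⁻ x in S i, ENNReal.ofReal (|g ‖x‖| ^ p * η ‖x‖) := hpolar.symm
  calc (∑' i : ι, ENNReal.ofReal (omegaD d ^ (p - 1) / (B i ^ ((d : ℝ) - 1) * (B i - A i))) *
        ∫⁻ ζ in ann d (IOmega d p η a b Ω) (A i) (B i),
          ENNReal.ofReal (|u ζ - u (xpt i)| ^ p * what ζ ^ (p - 1)))
      ≤ ∑' i : ι, ∫⁻ x in S i, ENNReal.ofReal (|g ‖x‖| ^ p * η ‖x‖) :=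
        ENNReal.tsum_le_tsum key
    _ = ∫⁻ x in ⋃ i, S i, ENNReal.ofReal (|g ‖x‖| ^ p * η ‖x‖) :=
        (lintegral_iUnion hSmeas (fun i j hij => (hdisj hij).preimage _) _).symm
    _ ≤ energyRad d p η g (IOmega d p η a b Ω) := by
        unfold energyRad
        exact lintegral_mono' (Measure.restrict_mono (Set.iUnion_subset hSIO) le_rfl) le_rfl


end
end

section
/- Let u ∈ Dom_{r,w} and fix i ∈ {1,…,N_η}. If ∫_{a_i}^{(a_i+b_i)/2} (r^{d−1}η(r))^{−1/(p−1)} dr = +∞, then lim_{|x|→a_i^+} |u(x)|^p (ŵ_p(x))^{p−1} = 0 (the limit taken over x ∈ I_{Ω,w}). Analogously, if ∫_{(a_i+b_i)/2}^{b_i} (r^{d−1}η(r))^{−1/(p−1)} dr = +∞, then lim_{|x|→b_i^−} |u(x)|^p (ŵ_p(x))^{p−1} = 0. -/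
open MeasureTheory Set Filter Topology Metric Function Classical
open scoped ENNReal RealInnerProductSpace

noncomputable section

theorem core_lemma (p : ℝ) (hp : 1 < p) (l : Filter ℝ) (v : ℝ → ℝ) (I : ℝ → ℝ≥0∞)
    (hItop : Filter.Tendsto I l (nhds ⊤))
    (hbound : ∀ ρ > (0:ℝ), ∃ c : ℝ, ∀ᶠ t in l, I t ≠ ⊤ →
      |v t| ≤ c + ρ * (I t).toReal ^ (1/(p/(p-1)))) :
    Filter.Tendsto (fun t => |v t| ^ p * (((I t)⁻¹).toReal) ^ (p-1)) l (nhds 0) := by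
  have hp0 : 0 < p := lt_trans one_pos hp
  have hp1 : 0 < p - 1 := by linarith
  have hp' : 0 < p/(p-1) := by positivity
  rw [NormedAddCommGroup.tendsto_nhds_zero]
  intro ε hε
  set ρ : ℝ := (ε/2) ^ (1/p) / 2 with hρdef
  have hρ : 0 < ρ := by positivity
  obtain ⟨c, hc⟩ := hbound ρ hρ
  set c' : ℝ := max c 0 with hc'def
  have hc'0 : 0 ≤ c' := le_max_right _ _
  set M : ℝ := (c'/ρ) ^ (p/(p-1)) + 1 with hMdef
  have hM1 : (1:ℝ) ≤ M := by
    rw [hMdef]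
    have : (0:ℝ) ≤ (c'/ρ) ^ (p/(p-1)) := Real.rpow_nonneg (by positivity) _
    linarith
  have hM0 : 0 < M := lt_of_lt_of_le one_pos hM1
  have hMI : ∀ᶠ t in l, ENNReal.ofReal M < I t :=
    hItop.eventually (lt_mem_nhds (by simp [ENNReal.ofReal_lt_top]))
  filter_upwards [hc, hMI] with t hct hMt
  by_cases htop : I t = ⊤
  · simp only [htop, ENNReal.inv_top, ENNReal.toReal_zero]
    rw [Real.zero_rpow (by linarith), mul_zero]
    simpa using hε
  · set x : ℝ := (I t).toReal with hxdef
    have hMx : M ≤ x := (ENNReal.ofReal_le_iff_le_toReal htop).mp hMt.le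
    have hx0 : 0 < x := lt_of_lt_of_le hM0 hMx
    -- c' ≤ ρ * M^(1/(p/(p-1)))
    have hcM : c' ≤ ρ * M ^ (1/(p/(p-1))) := by
      have h1 : (c'/ρ) ^ (p/(p-1)) ≤ M := by
        rw [hMdef]; linarith
      have h2 : ((c'/ρ) ^ (p/(p-1))) ^ (1/(p/(p-1))) ≤ M ^ (1/(p/(p-1))) :=
        Real.rpow_le_rpow (Real.rpow_nonneg (by positivity) _) h1 (by positivity)
      rw [← Real.rpow_mul (by positivity), mul_one_div, div_self (ne_of_gt hp'),
        Real.rpow_one] at h2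
      calc c' = ρ * (c'/ρ) := by field_simp
      _ ≤ ρ * M ^ (1/(p/(p-1))) := by nlinarith
    have hvb : |v t| ≤ 2 * ρ * x ^ (1/(p/(p-1))) := by
      have h3 : M ^ (1/(p/(p-1))) ≤ x ^ (1/(p/(p-1))) :=
        Real.rpow_le_rpow (le_of_lt hM0) hMx (by positivity)
      have := hct htop
      have hρx : 0 ≤ ρ := hρ.le
      nlinarith [le_max_left c 0]
    -- value bound
    have hxp : (((I t)⁻¹).toReal) ^ (p-1) = (x ^ (p-1))⁻¹ := by
      rw [ENNReal.toReal_inv, Real.inv_rpow hx0.le]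
    have hvp : |v t| ^ p ≤ (2*ρ) ^ p * x ^ (p-1) := by
      have h4 : |v t| ^ p ≤ (2 * ρ * x ^ (1/(p/(p-1)))) ^ p :=
        Real.rpow_le_rpow (abs_nonneg _) hvb hp0.le
      have h5 : (2 * ρ * x ^ (1/(p/(p-1)))) ^ p
          = (2*ρ) ^ p * x ^ (p-1) := by
        rw [Real.mul_rpow (by positivity) (Real.rpow_nonneg hx0.le _),
          ← Real.rpow_mul hx0.le]
        congr 2
        field_simp
      linarith [h4, h5.le]
    have hval : |v t| ^ p * (((I t)⁻¹).toReal) ^ (p-1) ≤ (2*ρ) ^ p := by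
      rw [hxp]
      have hxpos : 0 < x ^ (p-1) := Real.rpow_pos_of_pos hx0 _
      calc |v t| ^ p * (x ^ (p-1))⁻¹ ≤ ((2*ρ) ^ p * x ^ (p-1)) * (x ^ (p-1))⁻¹ := by
            apply mul_le_mul_of_nonneg_right hvp (by positivity)
      _ = (2*ρ) ^ p := by field_simp
    have h2ρ : (2*ρ) ^ p = ε/2 := by
      rw [hρdef]
      rw [show (2:ℝ) * ((ε/2) ^ (1/p) / 2) = (ε/2) ^ (1/p) by ring,
        ← Real.rpow_mul (by positivity), one_div_mul_cancel (ne_of_gt hp0), Real.rpow_one]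
    have hnn : 0 ≤ |v t| ^ p * (((I t)⁻¹).toReal) ^ (p-1) := by
      apply mul_nonneg (Real.rpow_nonneg (abs_nonneg _) _)
        (Real.rpow_nonneg ENNReal.toReal_nonneg _)
    rw [Real.norm_eq_abs, abs_of_nonneg hnn]
    calc |v t| ^ p * (((I t)⁻¹).toReal) ^ (p-1) ≤ (2*ρ) ^ p := hval
    _ = ε/2 := h2ρ
    _ < ε := by linarith



theorem lint_tendsto_top (f : ℝ → ℝ≥0∞) (A m : ℝ) (hAm : A < m)
    (htot : (∫⁻ s in Set.Ioo A m, f s) = ⊤) :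
    Filter.Tendsto (fun t => ∫⁻ s in Set.Ioo t m, f s) (nhdsWithin A (Set.Ioi A)) (nhds ⊤) := by
  set μ := volume.withDensity f with hμ
  have happ : ∀ u w : ℝ, μ (Set.Ioo u w) = ∫⁻ s in Set.Ioo u w, f s :=
    fun u w => withDensity_apply f measurableSet_Ioo
  have hd : (0:ℝ) < m - A := by linarith
  set s : ℕ → Set ℝ := fun n => Set.Ioo (A + (m-A)/(n+1)) m with hs
  have hmono : Monotone s := by
    intro n k hnk
    apply Set.Ioo_subset_Ioo_left
    gcongr
  have hunion : (⋃ n, s n) = Set.Ioo A m := by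
    apply Set.Subset.antisymm
    · refine Set.iUnion_subset fun n => Set.Ioo_subset_Ioo_left ?_
      have : (0:ℝ) < (m-A)/((n:ℝ)+1) := by positivity
      linarith
    · intro x hx
      obtain ⟨n, hn⟩ := exists_nat_one_div_lt (show 0 < (x - A)/(m - A) by
        apply div_pos (by linarith [hx.1]) hd)
      refine Set.mem_iUnion.mpr ⟨n, ⟨?_, hx.2⟩⟩
      have : (m - A) * (1/((n:ℝ)+1)) < (m - A) * ((x-A)/(m-A)) := by
        exact mul_lt_mul_of_pos_left hn hd
      rw [mul_div_cancel₀ _ (ne_of_gt hd)] at this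
      have h2 : (m-A)/((n:ℝ)+1) = (m - A) * (1/((n:ℝ)+1)) := by ring
      linarith
  have htend : Filter.Tendsto (fun n => μ (s n)) atTop (nhds ⊤) := by
    have := tendsto_measure_iUnion_atTop (μ := μ) hmono
    rwa [hunion, happ, htot] at this
  rw [ENNReal.tendsto_nhds_top_iff_nnreal] at htend ⊢
  intro x
  obtain ⟨n, hn⟩ := (htend x).exists
  have hlow : A < A + (m-A)/(n+1) := by
    have : (0:ℝ) < (m-A)/(n+1) := by positivity
    linarith
  filter_upwards [Ioo_mem_nhdsGT_of_mem (show A ∈ Set.Ico A (A + (m-A)/(n+1)) from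
    ⟨le_refl _, hlow⟩)] with t ht
  refine lt_of_lt_of_le hn ?_
  rw [happ]
  exact lintegral_mono_set (Set.Ioo_subset_Ioo_left ht.2.le)

theorem lint_tendsto_top' (f : ℝ → ℝ≥0∞) (m B : ℝ) (hmB : m < B)
    (htot : (∫⁻ s in Set.Ioo m B, f s) = ⊤) :
    Filter.Tendsto (fun t => ∫⁻ s in Set.Ioo m t, f s) (nhdsWithin B (Set.Iio B)) (nhds ⊤) := by
  set μ := volume.withDensity f with hμ
  have happ : ∀ u w : ℝ, μ (Set.Ioo u w) = ∫⁻ s in Set.Ioo u w, f s :=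
    fun u w => withDensity_apply f measurableSet_Ioo
  have hd : (0:ℝ) < B - m := by linarith
  set s : ℕ → Set ℝ := fun n => Set.Ioo m (B - (B-m)/(n+1)) with hs
  have hmono : Monotone s := by
    intro n k hnk
    apply Set.Ioo_subset_Ioo_right
    have : (B-m)/((k:ℝ)+1) ≤ (B-m)/((n:ℝ)+1) := by
      gcongr
    linarith
  have hunion : (⋃ n, s n) = Set.Ioo m B := by
    apply Set.Subset.antisymm
    · refine Set.iUnion_subset fun n => Set.Ioo_subset_Ioo_right ?_
      have : (0:ℝ) < (B-m)/((n:ℝ)+1) := by positivity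
      linarith
    · intro x hx
      obtain ⟨n, hn⟩ := exists_nat_one_div_lt (show 0 < (B - x)/(B - m) by
        apply div_pos (by linarith [hx.2]) hd)
      refine Set.mem_iUnion.mpr ⟨n, ⟨hx.1, ?_⟩⟩
      have : (B - m) * (1/((n:ℝ)+1)) < (B - m) * ((B-x)/(B-m)) :=
        mul_lt_mul_of_pos_left hn hd
      rw [mul_div_cancel₀ _ (ne_of_gt hd)] at this
      have h2 : (B-m)/((n:ℝ)+1) = (B - m) * (1/((n:ℝ)+1)) := by ring
      linarith
  have htend : Filter.Tendsto (fun n => μ (s n)) atTop (nhds ⊤) := by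
    have := tendsto_measure_iUnion_atTop (μ := μ) hmono
    rwa [hunion, happ, htot] at this
  rw [ENNReal.tendsto_nhds_top_iff_nnreal] at htend ⊢
  intro x
  obtain ⟨n, hn⟩ := (htend x).exists
  have hlow : B - (B-m)/(n+1) < B := by
    have : (0:ℝ) < (B-m)/(n+1) := by positivity
    linarith
  filter_upwards [Ioo_mem_nhdsLT_of_mem (show B ∈ Set.Ioc (B - (B-m)/(n+1)) B from
    ⟨hlow, le_refl _⟩)] with t ht
  refine lt_of_lt_of_le hn ?_
  rw [happ]
  exact lintegral_mono_set (Set.Ioo_subset_Ioo_right ht.1.le)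

theorem tail_small (f : ℝ → ℝ≥0∞) (A m : ℝ) (hAm : A < m)
    (hfin : (∫⁻ s in Set.Ioo A m, f s) ≠ ⊤) (ε : ℝ≥0∞) (hε : 0 < ε) :
    ∃ t₀ ∈ Set.Ioo A m, (∫⁻ s in Set.Ioo A t₀, f s) ≤ ε := by
  set μ := volume.withDensity f with hμ
  have happ : ∀ u w : ℝ, μ (Set.Ioo u w) = ∫⁻ s in Set.Ioo u w, f s :=
    fun u w => withDensity_apply f measurableSet_Ioo
  have hd : (0:ℝ) < m - A := by linarith
  set s : ℕ → Set ℝ := fun n => Set.Ioo A (A + (m-A)/(n+2)) with hs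
  have hanti : Antitone s := by
    intro n k hnk
    apply Set.Ioo_subset_Ioo_right
    gcongr
  have hempty : (⋂ n, s n) = ∅ := by
    rw [Set.eq_empty_iff_forall_notMem]
    intro x hx
    have hx0 := Set.mem_iInter.mp hx 0
    obtain ⟨n, hn⟩ := exists_nat_one_div_lt (show 0 < (x - A)/(m - A) by
      apply div_pos (by linarith [hx0.1]) hd)
    have hxn := Set.mem_iInter.mp hx (n+1)
    have h1 : (m - A) * (1/((n:ℝ)+1)) < (m - A) * ((x-A)/(m-A)) :=
      mul_lt_mul_of_pos_left hn hd
    rw [mul_div_cancel₀ _ (ne_of_gt hd)] at h1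
    have h2 : x < A + (m-A)/((n:ℝ)+1+2) := by exact_mod_cast hxn.2
    have h3 : (m-A)/((n:ℝ)+1+2) ≤ (m-A)/((n:ℝ)+1) := by gcongr <;> linarith
    have h4 : (m-A)/((n:ℝ)+1) = (m - A) * (1/((n:ℝ)+1)) := by ring
    linarith
  have hfin0 : μ (s 0) ≠ ⊤ := by
    rw [happ]
    refine ne_top_of_le_ne_top hfin (lintegral_mono_set (Set.Ioo_subset_Ioo_right ?_))
    have : (m-A)/(2:ℝ) ≤ m - A := by linarith
    norm_num
    linarith
  have htend : Filter.Tendsto (fun n => μ (s n)) atTop (nhds 0) := by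
    have := tendsto_measure_iInter_atTop (μ := μ)
      (fun n => measurableSet_Ioo.nullMeasurableSet) hanti ⟨0, hfin0⟩
    rwa [hempty, measure_empty] at this
  obtain ⟨n, hn⟩ := (htend.eventually (gt_mem_nhds hε)).exists
  refine ⟨A + (m-A)/(n+2), ⟨?_, ?_⟩, ?_⟩
  · have : (0:ℝ) < (m-A)/(n+2) := by positivity
    linarith
  · have h1 : (m-A)/((n:ℝ)+2) < m - A := by
      rw [div_lt_iff₀ (by positivity)]
      nlinarith [Nat.cast_nonneg (α := ℝ) n]
    linarith
  · rw [← happ]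
    exact hn.le

theorem tail_small' (f : ℝ → ℝ≥0∞) (m B : ℝ) (hmB : m < B)
    (hfin : (∫⁻ s in Set.Ioo m B, f s) ≠ ⊤) (ε : ℝ≥0∞) (hε : 0 < ε) :
    ∃ t₀ ∈ Set.Ioo m B, (∫⁻ s in Set.Ioo t₀ B, f s) ≤ ε := by
  set μ := volume.withDensity f with hμ
  have happ : ∀ u w : ℝ, μ (Set.Ioo u w) = ∫⁻ s in Set.Ioo u w, f s :=
    fun u w => withDensity_apply f measurableSet_Ioo
  have hd : (0:ℝ) < B - m := by linarith
  set s : ℕ → Set ℝ := fun n => Set.Ioo (B - (B-m)/(n+2)) B with hs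
  have hanti : Antitone s := by
    intro n k hnk
    apply Set.Ioo_subset_Ioo_left
    have : (B-m)/((k:ℝ)+2) ≤ (B-m)/((n:ℝ)+2) := by gcongr
    linarith
  have hempty : (⋂ n, s n) = ∅ := by
    rw [Set.eq_empty_iff_forall_notMem]
    intro x hx
    have hx0 := Set.mem_iInter.mp hx 0
    obtain ⟨n, hn⟩ := exists_nat_one_div_lt (show 0 < (B - x)/(B - m) by
      apply div_pos (by linarith [hx0.2]) hd)
    have hxn := Set.mem_iInter.mp hx (n+1)
    have h1 : (B - m) * (1/((n:ℝ)+1)) < (B - m) * ((B-x)/(B-m)) :=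
      mul_lt_mul_of_pos_left hn hd
    rw [mul_div_cancel₀ _ (ne_of_gt hd)] at h1
    have h2 : B - (B-m)/((n:ℝ)+1+2) < x := by exact_mod_cast hxn.1
    have h3 : (B-m)/((n:ℝ)+1+2) ≤ (B-m)/((n:ℝ)+1) := by gcongr <;> linarith
    have h4 : (B-m)/((n:ℝ)+1) = (B - m) * (1/((n:ℝ)+1)) := by ring
    linarith
  have hfin0 : μ (s 0) ≠ ⊤ := by
    rw [happ]
    refine ne_top_of_le_ne_top hfin (lintegral_mono_set (Set.Ioo_subset_Ioo_left ?_))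
    have : (B-m)/(2:ℝ) ≤ B - m := by linarith
    norm_num
    linarith
  have htend : Filter.Tendsto (fun n => μ (s n)) atTop (nhds 0) := by
    have := tendsto_measure_iInter_atTop (μ := μ)
      (fun n => measurableSet_Ioo.nullMeasurableSet) hanti ⟨0, hfin0⟩
    rwa [hempty, measure_empty] at this
  obtain ⟨n, hn⟩ := (htend.eventually (gt_mem_nhds hε)).exists
  refine ⟨B - (B-m)/(n+2), ⟨?_, ?_⟩, ?_⟩
  · have h1 : (B-m)/((n:ℝ)+2) < B - m := by
      rw [div_lt_iff₀ (by positivity)]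
      nlinarith [Nat.cast_nonneg (α := ℝ) n]
    linarith
  · have : (0:ℝ) < (B-m)/(n+2) := by positivity
    linarith
  · rw [← happ]
    exact hn.le



theorem holder_est (d : ℕ) (p : ℝ) (hp : 1 < p) (η g : ℝ → ℝ) (t t₀ : ℝ) (ht : t ≤ t₀)
    (hη : AEMeasurable η (volume.restrict (Set.Ioo t t₀)))
    (hg : MeasureTheory.IntegrableOn g (Set.Ioc t t₀))
    (hpos : ∀ᵐ s ∂(volume.restrict (Set.Ioo t t₀)),
      ENNReal.ofReal (s ^ ((d:ℝ)-1) * η s) ≠ 0)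
    (E R : ℝ≥0∞)
    (hE : (∫⁻ s in Set.Ioo t t₀, ENNReal.ofReal (s ^ ((d:ℝ)-1) * |g s| ^ p * η s)) ≤ E)
    (hR : (∫⁻ s in Set.Ioo t t₀,
        ENNReal.ofReal (s ^ ((d:ℝ)-1) * η s) ^ (-(1:ℝ)/(p-1))) ≤ R)
    (hEtop : E ≠ ⊤) (hRtop : R ≠ ⊤) :
    ∫ s in t..t₀, |g s| ≤ E.toReal ^ (1/p) * R.toReal ^ (1/(p/(p-1))) := by
  have hp0 : 0 < p := lt_trans one_pos hp
  have hp1 : 0 < p - 1 := by linarith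
  set q : ℝ := p/(p-1) with hqdef
  have hq0 : 0 < q := by positivity
  have hpq : Real.HolderConjugate p q := Real.HolderConjugate.conjExponent hp
  set μ := volume.restrict (Set.Ioo t t₀) with hμdef
  set θ : ℝ → ℝ := fun s => s ^ ((d:ℝ)-1) * η s with hθdef
  have hθm : AEMeasurable θ μ := by
    apply AEMeasurable.mul _ hη
    fun_prop
  have hgIoo : MeasureTheory.IntegrableOn g (Set.Ioo t t₀) :=
    hg.mono_set Set.Ioo_subset_Ioc_self
  have hgm : AEMeasurable g μ := hgIoo.aemeasurable
  set F : ℝ → ℝ≥0∞ := fun s => ENNReal.ofReal |g s| * ENNReal.ofReal (θ s) ^ (1/p)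
    with hFdef
  set H : ℝ → ℝ≥0∞ := fun s => ENNReal.ofReal (θ s) ^ (-(1/p)) with hHdef
  have hFm : AEMeasurable F μ := by
    apply AEMeasurable.mul
    · exact ENNReal.measurable_ofReal.comp_aemeasurable ((continuous_abs.measurable.comp_aemeasurable hgm))
    · exact (ENNReal.measurable_ofReal.comp_aemeasurable hθm).pow_const _
  have hHm : AEMeasurable H μ :=
    (ENNReal.measurable_ofReal.comp_aemeasurable hθm).pow_const _
  have main := ENNReal.lintegral_mul_le_Lp_mul_Lq μ hpq hFm hHm
  -- identify the three lintegrals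
  have hFH : ∫⁻ s, (F * H) s ∂μ = ∫⁻ s, ENNReal.ofReal |g s| ∂μ := by
    apply lintegral_congr_ae
    filter_upwards [hpos] with s hs
    have hne : ENNReal.ofReal (θ s) ≠ 0 := hs
    have hnt : ENNReal.ofReal (θ s) ≠ ⊤ := ENNReal.ofReal_ne_top
    show F s * H s = _
    rw [hFdef, hHdef]
    simp only []
    rw [mul_assoc, ← ENNReal.rpow_add _ _ hne hnt]
    norm_num
  have hFp : ∫⁻ s, F s ^ p ∂μ
      = ∫⁻ s in Set.Ioo t t₀, ENNReal.ofReal (s ^ ((d:ℝ)-1) * |g s| ^ p * η s) := by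
    apply lintegral_congr_ae
    apply Filter.Eventually.of_forall
    intro s
    rw [hFdef]
    simp only []
    rw [ENNReal.mul_rpow_of_nonneg _ _ hp0.le, ← ENNReal.rpow_mul,
      one_div_mul_cancel (ne_of_gt hp0), ENNReal.rpow_one,
      ENNReal.ofReal_rpow_of_nonneg (abs_nonneg _) hp0.le,
      ← ENNReal.ofReal_mul (by positivity)]
    congr 1
    rw [hθdef]
    ring
  have hHq : ∫⁻ s, H s ^ q ∂μ
      = ∫⁻ s in Set.Ioo t t₀, ENNReal.ofReal (s ^ ((d:ℝ)-1) * η s) ^ (-(1:ℝ)/(p-1)) := by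
    apply lintegral_congr_ae
    apply Filter.Eventually.of_forall
    intro s
    rw [hHdef]
    simp only []
    rw [← ENNReal.rpow_mul]
    congr 1
    rw [hqdef]
    field_simp
  rw [hFH, hFp, hHq] at main
  -- bound RHS
  have hmain2 : (∫⁻ s, ENNReal.ofReal |g s| ∂μ) ≤ E ^ (1/p) * R ^ (1/q) := by
    refine le_trans main (mul_le_mul' ?_ ?_)
    · exact ENNReal.rpow_le_rpow hE (by positivity)
    · exact ENNReal.rpow_le_rpow hR (by positivity)
  have hrhs_top : E ^ (1/p) * R ^ (1/q) ≠ ⊤ :=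
    ENNReal.mul_ne_top (ENNReal.rpow_ne_top_of_nonneg (by positivity) hEtop)
      (ENNReal.rpow_ne_top_of_nonneg (by positivity) hRtop)
  have h1 : ∫ s in t..t₀, |g s| = (∫⁻ s, ENNReal.ofReal |g s| ∂μ).toReal := by
    rw [intervalIntegral.integral_of_le ht]
    rw [hμdef, Measure.restrict_congr_set Ioo_ae_eq_Ioc]
    exact integral_eq_lintegral_of_nonneg_ae (Filter.Eventually.of_forall fun s => abs_nonneg _)
      (hg.abs.aestronglyMeasurable)
  rw [h1]
  calc (∫⁻ s, ENNReal.ofReal |g s| ∂μ).toReal ≤ (E ^ (1/p) * R ^ (1/q)).toReal :=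
        ENNReal.toReal_mono hrhs_top hmain2
  _ = E.toReal ^ (1/p) * R.toReal ^ (1/q) := by
      rw [ENNReal.toReal_mul, ENNReal.toReal_rpow, ENNReal.toReal_rpow]
  _ = E.toReal ^ (1/p) * R.toReal ^ (1/(p/(p-1))) := by rw [hqdef]


theorem stitch_lemma (v g : ℝ → ℝ) (D : Set ℝ) (hv : IsW11loc v g D)
    (Ai Bi : ℝ) (hAB : Ai < Bi) (hsub : Set.Ioo Ai Bi ⊆ D)
    (hAno : Ai ∉ D) (hBno : Bi ∉ D) :
    ∀ t ∈ Set.Ioo Ai Bi, IntervalIntegrable g volume ((Ai+Bi)/2) t ∧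
      v t = v ((Ai+Bi)/2) + ∫ s in ((Ai+Bi)/2)..t, g s := by
  set m := (Ai+Bi)/2 with hmdef
  have hmmem : m ∈ Set.Ioo Ai Bi := ⟨by rw [hmdef]; linarith, by rw [hmdef]; linarith⟩
  choose! ε hε0 hIccD hint hrep using hv
  set P : ℝ → Prop := fun t => IntervalIntegrable g volume m t ∧
      v t = v m + ∫ s in m..t, g s with hPdef
  -- the Icc around a point of Ioo Ai Bi stays inside Ioo Ai Bi
  have hIccIoo : ∀ t ∈ Set.Ioo Ai Bi, Set.Icc (t - ε t) (t + ε t) ⊆ Set.Ioo Ai Bi := by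
    intro t ht
    have htD : t ∈ D := hsub ht
    have hIcc := hIccD t htD
    have hε := hε0 t htD
    have hA : Ai < t - ε t := by
      by_contra h
      push_neg at h
      exact hAno (hIcc ⟨h, by linarith [ht.1]⟩)
    have hB : t + ε t < Bi := by
      by_contra h
      push_neg at h
      exact hBno (hIcc ⟨by linarith [ht.2], h⟩)
    intro x hx
    exact ⟨lt_of_lt_of_le hA hx.1, lt_of_le_of_lt hx.2 hB⟩
  -- key transfer step within one Icc
  have key : ∀ t ∈ Set.Ioo Ai Bi, ∀ x ∈ Set.Icc (t - ε t) (t + ε t),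
      ∀ y ∈ Set.Icc (t - ε t) (t + ε t), P x → P y := by
    intro t ht x hx y hy hPx
    have htD : t ∈ D := hsub ht
    have hIg := hint t htD
    have hR := hrep t htD
    have hIxy : IntervalIntegrable g volume x y := by
      rw [intervalIntegrable_iff]
      exact hIg.mono_set (uIoc_subset_uIcc.trans (uIcc_subset_Icc hx hy))
    have hIax : IntervalIntegrable g volume (t - ε t) x := by
      rw [intervalIntegrable_iff]
      exact hIg.mono_set (uIoc_subset_uIcc.trans
        (uIcc_subset_Icc ⟨le_refl _, by linarith [hε0 t htD]⟩ hx))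
    have hIay : IntervalIntegrable g volume (t - ε t) y := by
      rw [intervalIntegrable_iff]
      exact hIg.mono_set (uIoc_subset_uIcc.trans
        (uIcc_subset_Icc ⟨le_refl _, by linarith [hε0 t htD]⟩ hy))
    have hvy : v y = v x + ∫ s in x..y, g s := by
      rw [hR y hy, hR x hx, ← intervalIntegral.integral_interval_sub_left hIay hIax]
      ring
    constructor
    · exact hPx.1.trans hIxy
    · rw [hvy, hPx.2, ← intervalIntegral.integral_add_adjacent_intervals hPx.1 hIxy]
      ring
  have hPm : P m := by
    constructor
    · rw [intervalIntegrable_iff]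
      simp [Set.uIoc]
    · simp
  -- preconnectedness
  have hall : ∀ t ∈ Set.Ioo Ai Bi, P t := by
    by_contra hcon
    push_neg at hcon
    obtain ⟨t₂, ht₂, hPt₂⟩ := hcon
    set U : Set ℝ := ⋃ t ∈ {t ∈ Set.Ioo Ai Bi | P t}, Set.Ioo (t - ε t) (t + ε t) with hU
    set V : Set ℝ := ⋃ t ∈ {t ∈ Set.Ioo Ai Bi | ¬ P t}, Set.Ioo (t - ε t) (t + ε t) with hV
    have hUopen : IsOpen U := isOpen_biUnion (fun _ _ => isOpen_Ioo)
    have hVopen : IsOpen V := isOpen_biUnion (fun _ _ => isOpen_Ioo)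
    have hself : ∀ t ∈ Set.Ioo Ai Bi, t ∈ Set.Ioo (t - ε t) (t + ε t) := by
      intro t ht
      have := hε0 t (hsub ht)
      exact ⟨by linarith, by linarith⟩
    have hcover : Set.Ioo Ai Bi ⊆ U ∪ V := by
      intro t ht
      by_cases hPt : P t
      · exact Or.inl (Set.mem_biUnion ⟨ht, hPt⟩ (hself t ht))
      · exact Or.inr (Set.mem_biUnion ⟨ht, hPt⟩ (hself t ht))
    have hne1 : (Set.Ioo Ai Bi ∩ U).Nonempty :=
      ⟨m, hmmem, Set.mem_biUnion ⟨hmmem, hPm⟩ (hself m hmmem)⟩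
    have hne2 : (Set.Ioo Ai Bi ∩ V).Nonempty :=
      ⟨t₂, ht₂, Set.mem_biUnion ⟨ht₂, hPt₂⟩ (hself t₂ ht₂)⟩
    obtain ⟨z, hz, hzU, hzV⟩ := isPreconnected_Ioo U V hUopen hVopen hcover hne1 hne2
    obtain ⟨t1, ht1, hzt1⟩ := Set.mem_iUnion₂.mp hzU
    obtain ⟨t2, ht2, hzt2⟩ := Set.mem_iUnion₂.mp hzV
    have hPz : P z := key t1 ht1.1 t1 (by
        have := hε0 t1 (hsub ht1.1); exact ⟨by linarith, by linarith⟩)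
      z (Set.Ioo_subset_Icc_self hzt1) ht1.2
    exact ht2.2 (key t2 ht2.1 z (Set.Ioo_subset_Icc_self hzt2) t2 (by
        have := hε0 t2 (hsub ht2.1); exact ⟨by linarith, by linarith⟩) hPz)
  exact hall


theorem statement_9
    (d : ℕ) (hd : 1 ≤ d) (p : ℝ) (hp : 1 < p)
    (a b : ℝ) (ha : 0 ≤ a) (hab : a < b)
    (Ω : Set (Eucl d))
    (hΩ : Ω = {x : Eucl d | ‖x‖ < b} ∨ Ω = {x : Eucl d | a < ‖x‖ ∧ ‖x‖ < b})
    (η : ℝ → ℝ) (hη0 : ∀ᵐ r ∂(volume : Measure ℝ), 0 ≤ η r)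
    (hη1 : MeasureTheory.LocallyIntegrable η)
    (hηsupp : Function.support η ⊆ Set.Ioo a b)
    (w : Eucl d → ℝ) (hw : ∀ x, w x = η ‖x‖)
    (ι : Type) [Countable ι] [Nonempty ι] (A B : ι → ℝ)
    (hABlt : ∀ i, A i < B i) (hABsub : ∀ i, a ≤ A i ∧ B i ≤ b)
    (hdisj : Pairwise (Function.onFun Disjoint fun i => Set.Ioo (A i) (B i)))
    (hdec : degSet p η a b = ⋃ i, Set.Ioo (A i) (B i))
    (ηhat : ℝ → ℝ)
    (hηhat : ∀ i, ∀ t ∈ Set.Icc (A i) (B i), ηhat t = etaHatI d p η (A i) (B i) t)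
    (hηhat0 : ∀ t ∉ ⋃ i, Set.Icc (A i) (B i), ηhat t = 0)
    (what : Eucl d → ℝ) (hwhat : ∀ x, what x = (omegaD d)⁻¹ * ηhat ‖x‖)
    (u : Eucl d → ℝ) (v g : ℝ → ℝ) (hu : MemDomR d p η a b Ω u v g) (i : ι) :
    ((∫⁻ r in Set.Ioo (A i) ((A i + B i) / 2),
        rpw p (fun s => s ^ ((d : ℝ) - 1) * η s) r) = ⊤ →
      Filter.Tendsto (fun x : Eucl d => |u x| ^ p * what x ^ (p - 1))
        ((Filter.comap (fun x : Eucl d => ‖x‖) (nhdsWithin (A i) (Set.Ioi (A i)))) ⊓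
          Filter.principal (IOmega d p η a b Ω)) (nhds 0)) ∧
    ((∫⁻ r in Set.Ioo ((A i + B i) / 2) (B i),
        rpw p (fun s => s ^ ((d : ℝ) - 1) * η s) r) = ⊤ →
      Filter.Tendsto (fun x : Eucl d => |u x| ^ p * what x ^ (p - 1))
        ((Filter.comap (fun x : Eucl d => ‖x‖) (nhdsWithin (B i) (Set.Iio (B i)))) ⊓
          Filter.principal (IOmega d p η a b Ω)) (nhds 0)) := by
  obtain ⟨hum, hW, hEn, huv⟩ := hu
  have hp0 : 0 < p := lt_trans one_pos hp
  have hp1 : 0 < p - 1 := by linarith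
  have hABi : A i < B i := hABlt i
  have hIooD : Set.Ioo (A i) (B i) ⊆ degSet p η a b := by
    rw [hdec]
    exact Set.subset_iUnion (fun j => Set.Ioo (A j) (B j)) i
  have hAno : A i ∉ degSet p η a b := by
    rw [hdec]
    intro hmem
    obtain ⟨j, hj⟩ := Set.mem_iUnion.mp hmem
    by_cases hij : j = i
    · subst hij
      exact lt_irrefl _ hj.1
    · have hc1 : A i < min (B i) (B j) := lt_min hABi hj.2
      have hz1 : A i < (A i + min (B i) (B j))/2 := by linarith
      have hz2 : (A i + min (B i) (B j))/2 < min (B i) (B j) := by linarith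
      exact Set.disjoint_left.mp (hdisj (fun h => hij h.symm))
        ⟨hz1, lt_of_lt_of_le hz2 (min_le_left _ _)⟩
        ⟨lt_trans hj.1 hz1, lt_of_lt_of_le hz2 (min_le_right _ _)⟩
  have hBno : B i ∉ degSet p η a b := by
    rw [hdec]
    intro hmem
    obtain ⟨j, hj⟩ := Set.mem_iUnion.mp hmem
    by_cases hij : j = i
    · subst hij
      exact lt_irrefl _ hj.2
    · have hc1 : max (A i) (A j) < B i := max_lt hABi hj.1
      have hz1 : max (A i) (A j) < (max (A i) (A j) + B i)/2 := by linarith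
      have hz2 : (max (A i) (A j) + B i)/2 < B i := by linarith
      exact Set.disjoint_left.mp (hdisj (fun h => hij h.symm))
        ⟨lt_of_le_of_lt (le_max_left _ _) hz1, hz2⟩
        ⟨lt_of_le_of_lt (le_max_right _ _) hz1, lt_trans hz2 hj.2⟩
  have stitch : ∀ t ∈ Set.Ioo (A i) (B i),
      IntervalIntegrable g volume ((A i + B i)/2) t ∧
      v t = v ((A i + B i)/2) + ∫ s in ((A i + B i)/2)..t, g s :=
    stitch_lemma v g (degSet p η a b) hW (A i) (B i) hABi hIooD hAno hBno
  have hηm : AEMeasurable η (volume : Measure ℝ) := hη1.aestronglyMeasurable.aemeasurable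
  have hrpweq : rpw p (fun s => s ^ ((d:ℝ)-1) * η s)
      = fun s => ENNReal.ofReal (s ^ ((d:ℝ)-1) * η s) ^ (-(1:ℝ)/(p-1)) := rfl
  have hrpwm : AEMeasurable (rpw p (fun s => s ^ ((d:ℝ)-1) * η s)) (volume : Measure ℝ) := by
    rw [hrpweq]
    exact (ENNReal.measurable_ofReal.comp_aemeasurable
      (((by fun_prop : Measurable fun s:ℝ => s ^ ((d:ℝ)-1)).aemeasurable).mul hηm)).pow_const _
  have hrpwneg : (-(1:ℝ)/(p-1)) < 0 := div_neg_of_neg_of_pos (by norm_num) hp1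
  have hEfin : (∫⁻ r in Set.Ioo (A i) (B i),
      ENNReal.ofReal (r ^ ((d:ℝ)-1) * |g r| ^ p * η r)) ≠ ⊤ := by
    refine ne_top_of_le_ne_top (ne_of_lt hEn) ?_
    exact lintegral_mono_set hIooD
  have hc00 : (0:ℝ) ≤ (omegaD d)⁻¹ := inv_nonneg.mpr ENNReal.toReal_nonneg
  have hAm : A i < (A i + B i)/2 := by linarith
  have hmB : (A i + B i)/2 < B i := by linarith
  constructor
  · -- side a
    intro htot
    set J : ℝ → ℝ≥0∞ :=
      fun t => ∫⁻ s in Set.Ioo t ((A i + B i)/2), rpw p (fun s => s ^ ((d:ℝ)-1) * η s) s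
      with hJdef
    have hJtop : Filter.Tendsto J (nhdsWithin (A i) (Set.Ioi (A i))) (nhds ⊤) :=
      lint_tendsto_top _ (A i) _ hAm htot
    have hbound : ∀ ρ > (0:ℝ), ∃ c, ∀ᶠ t in nhdsWithin (A i) (Set.Ioi (A i)),
        J t ≠ ⊤ → |v t| ≤ c + ρ * (J t).toReal ^ (1/(p/(p-1))) := by
      intro ρ hρ
      have hAm' : A i < (3 * A i + B i)/4 := by linarith
      have hm'm : (3 * A i + B i)/4 < (A i + B i)/2 := by linarith
      have hfin' : (∫⁻ s in Set.Ioo (A i) ((3 * A i + B i)/4),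
          ENNReal.ofReal (s ^ ((d:ℝ)-1) * |g s| ^ p * η s)) ≠ ⊤ :=
        ne_top_of_le_ne_top hEfin (lintegral_mono_set
          (Set.Ioo_subset_Ioo_right (by linarith)))
      obtain ⟨t₀, ht₀, hsmall⟩ := tail_small _ (A i) _ hAm' hfin'
        (ENNReal.ofReal (ρ ^ p)) (ENNReal.ofReal_pos.mpr (by positivity))
      refine ⟨|v t₀|, ?_⟩
      filter_upwards [Ioo_mem_nhdsGT_of_mem
        (show A i ∈ Set.Ico (A i) t₀ from ⟨le_refl _, ht₀.1⟩)] with t ht hJt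
      have ht₀B : t₀ < B i := by linarith [ht₀.2]
      have htIoo : t ∈ Set.Ioo (A i) (B i) := ⟨ht.1, by linarith [ht.2, ht₀.2]⟩
      have ht₀Ioo : t₀ ∈ Set.Ioo (A i) (B i) := ⟨ht₀.1, ht₀B⟩
      obtain ⟨hPt1, hPt2⟩ := stitch t htIoo
      obtain ⟨hQ1, hQ2⟩ := stitch t₀ ht₀Ioo
      have hvdiff : v t₀ - v t = ∫ s in t..t₀, g s := by
        rw [hPt2, hQ2, ← intervalIntegral.integral_interval_sub_left hQ1 hPt1]
        ring
      have hIt_t0 : IntervalIntegrable g volume t t₀ := hPt1.symm.trans hQ1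
      have hgIoc : IntegrableOn g (Set.Ioc t t₀) := by
        rw [intervalIntegrable_iff, Set.uIoc_of_le ht.2.le] at hIt_t0
        exact hIt_t0
      have ht₀m : t₀ ≤ (A i + B i)/2 := by linarith [ht₀.2]
      have hposm : ∀ᵐ s ∂(volume.restrict (Set.Ioo t ((A i + B i)/2))),
          rpw p (fun s => s ^ ((d:ℝ)-1) * η s) s < ⊤ := ae_lt_top' hrpwm.restrict hJt
      have hpos : ∀ᵐ s ∂(volume.restrict (Set.Ioo t t₀)),
          ENNReal.ofReal (s ^ ((d:ℝ)-1) * η s) ≠ 0 := by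
        apply ae_restrict_of_ae_restrict_of_subset
          (Set.Ioo_subset_Ioo_right ht₀m)
        filter_upwards [hposm] with s hs h0
        rw [hrpweq] at hs
        simp only [h0] at hs
        rw [ENNReal.zero_rpow_of_neg hrpwneg] at hs
        exact lt_irrefl _ hs
      have hE : (∫⁻ s in Set.Ioo t t₀,
          ENNReal.ofReal (s ^ ((d:ℝ)-1) * |g s| ^ p * η s)) ≤ ENNReal.ofReal (ρ ^ p) :=
        le_trans (lintegral_mono_set (Set.Ioo_subset_Ioo_left ht.1.le)) hsmall
      have hR : (∫⁻ s in Set.Ioo t t₀,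
          ENNReal.ofReal (s ^ ((d:ℝ)-1) * η s) ^ (-(1:ℝ)/(p-1))) ≤ J t := by
        rw [hJdef, hrpweq]
        exact lintegral_mono_set (Set.Ioo_subset_Ioo_right ht₀m)
      have hest := holder_est d p hp η g t t₀ ht.2.le hηm.restrict hgIoc hpos
        (ENNReal.ofReal (ρ ^ p)) (J t) hE hR ENNReal.ofReal_ne_top hJt
      have hρp : (ENNReal.ofReal (ρ ^ p)).toReal ^ (1/p) = ρ := by
        rw [ENNReal.toReal_ofReal (by positivity), ← Real.rpow_mul hρ.le,
          mul_one_div, div_self (ne_of_gt hp0), Real.rpow_one]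
      rw [hρp] at hest
      have habs : |v t| - |v t₀| ≤ |v t₀ - v t| := by
        have := abs_sub_abs_le_abs_sub (v t) (v t₀)
        rw [abs_sub_comm] at this
        linarith
      have hintabs : |∫ s in t..t₀, g s| ≤ ∫ s in t..t₀, |g s| :=
        intervalIntegral.abs_integral_le_integral_abs ht.2.le
      rw [hvdiff] at habs
      linarith
    have hcore := core_lemma p hp _ v J hJtop hbound
    have h2 := hcore.const_mul (((omegaD d)⁻¹) ^ (p-1))
    rw [mul_zero] at h2
    have hφ : Filter.Tendsto (fun t => |v t| ^ p * ((omegaD d)⁻¹ * ηhat t) ^ (p-1))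
        (nhdsWithin (A i) (Set.Ioi (A i))) (nhds 0) := by
      apply h2.congr'
      have hAm'' : A i < (3 * A i + B i)/4 := by linarith
      filter_upwards [Ioo_mem_nhdsGT_of_mem
        (show A i ∈ Set.Ico (A i) ((3 * A i + B i)/4) from ⟨le_refl _, hAm''⟩)] with t ht
      have hIcc : t ∈ Set.Icc (A i) (B i) := ⟨ht.1.le, by linarith [ht.2]⟩
      rw [hηhat i t hIcc]
      have hbr : etaHatI d p η (A i) (B i) t = ((J t)⁻¹).toReal := by
        rw [etaHatI, if_pos ht.2.le]
      rw [hbr, Real.mul_rpow hc00 ENNReal.toReal_nonneg]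
      ring
    have hnormt : Filter.Tendsto (fun x : Eucl d => ‖x‖)
        ((Filter.comap (fun x : Eucl d => ‖x‖) (nhdsWithin (A i) (Set.Ioi (A i)))) ⊓
          Filter.principal (IOmega d p η a b Ω)) (nhdsWithin (A i) (Set.Ioi (A i))) :=
      tendsto_comap.mono_left inf_le_left
    have hcomp := hφ.comp hnormt
    apply hcomp.congr'
    have hev : ∀ᶠ x in ((Filter.comap (fun x : Eucl d => ‖x‖)
        (nhdsWithin (A i) (Set.Ioi (A i)))) ⊓
          Filter.principal (IOmega d p η a b Ω)), x ∈ IOmega d p η a b Ω :=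
      Filter.eventually_inf_principal.mpr (Filter.Eventually.of_forall fun x hx => hx)
    filter_upwards [hev] with x hx
    simp only [Function.comp]
    rw [huv x hx.1, hwhat x]
  · -- side b
    intro htot
    set K : ℝ → ℝ≥0∞ :=
      fun t => ∫⁻ s in Set.Ioo ((A i + B i)/2) t, rpw p (fun s => s ^ ((d:ℝ)-1) * η s) s
      with hKdef
    have hKtop : Filter.Tendsto K (nhdsWithin (B i) (Set.Iio (B i))) (nhds ⊤) :=
      lint_tendsto_top' _ _ (B i) hmB htot
    have hbound : ∀ ρ > (0:ℝ), ∃ c, ∀ᶠ t in nhdsWithin (B i) (Set.Iio (B i)),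
        K t ≠ ⊤ → |v t| ≤ c + ρ * (K t).toReal ^ (1/(p/(p-1))) := by
      intro ρ hρ
      have hm''B : (A i + 3 * B i)/4 < B i := by linarith
      have hmm'' : (A i + B i)/2 < (A i + 3 * B i)/4 := by linarith
      have hfin' : (∫⁻ s in Set.Ioo ((A i + 3 * B i)/4) (B i),
          ENNReal.ofReal (s ^ ((d:ℝ)-1) * |g s| ^ p * η s)) ≠ ⊤ :=
        ne_top_of_le_ne_top hEfin (lintegral_mono_set
          (Set.Ioo_subset_Ioo_left (by linarith)))
      obtain ⟨t₀, ht₀, hsmall⟩ := tail_small' _ _ (B i) hm''B hfin'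
        (ENNReal.ofReal (ρ ^ p)) (ENNReal.ofReal_pos.mpr (by positivity))
      refine ⟨|v t₀|, ?_⟩
      filter_upwards [Ioo_mem_nhdsLT_of_mem
        (show B i ∈ Set.Ioc t₀ (B i) from ⟨ht₀.2, le_refl _⟩)] with t ht hKt
      have ht₀A : A i < t₀ := by linarith [ht₀.1]
      have htIoo : t ∈ Set.Ioo (A i) (B i) := ⟨by linarith [ht.1, ht₀.1], ht.2⟩
      have ht₀Ioo : t₀ ∈ Set.Ioo (A i) (B i) := ⟨ht₀A, ht₀.2⟩
      obtain ⟨hPt1, hPt2⟩ := stitch t htIoo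
      obtain ⟨hQ1, hQ2⟩ := stitch t₀ ht₀Ioo
      have hvdiff : v t - v t₀ = ∫ s in t₀..t, g s := by
        rw [hPt2, hQ2, ← intervalIntegral.integral_interval_sub_left hPt1 hQ1]
        ring
      have hIt_t0 : IntervalIntegrable g volume t₀ t := hQ1.symm.trans hPt1
      have hgIoc : IntegrableOn g (Set.Ioc t₀ t) := by
        rw [intervalIntegrable_iff, Set.uIoc_of_le ht.1.le] at hIt_t0
        exact hIt_t0
      have ht₀m : (A i + B i)/2 ≤ t₀ := by linarith [ht₀.1]
      have hposm : ∀ᵐ s ∂(volume.restrict (Set.Ioo ((A i + B i)/2) t)),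
          rpw p (fun s => s ^ ((d:ℝ)-1) * η s) s < ⊤ := ae_lt_top' hrpwm.restrict hKt
      have hpos : ∀ᵐ s ∂(volume.restrict (Set.Ioo t₀ t)),
          ENNReal.ofReal (s ^ ((d:ℝ)-1) * η s) ≠ 0 := by
        apply ae_restrict_of_ae_restrict_of_subset
          (Set.Ioo_subset_Ioo_left ht₀m)
        filter_upwards [hposm] with s hs h0
        rw [hrpweq] at hs
        simp only [h0] at hs
        rw [ENNReal.zero_rpow_of_neg hrpwneg] at hs
        exact lt_irrefl _ hs
      have hE : (∫⁻ s in Set.Ioo t₀ t,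
          ENNReal.ofReal (s ^ ((d:ℝ)-1) * |g s| ^ p * η s)) ≤ ENNReal.ofReal (ρ ^ p) :=
        le_trans (lintegral_mono_set (Set.Ioo_subset_Ioo_right ht.2.le)) hsmall
      have hR : (∫⁻ s in Set.Ioo t₀ t,
          ENNReal.ofReal (s ^ ((d:ℝ)-1) * η s) ^ (-(1:ℝ)/(p-1))) ≤ K t := by
        rw [hKdef, hrpweq]
        exact lintegral_mono_set (Set.Ioo_subset_Ioo_left ht₀m)
      have hest := holder_est d p hp η g t₀ t ht.1.le hηm.restrict hgIoc hpos
        (ENNReal.ofReal (ρ ^ p)) (K t) hE hR ENNReal.ofReal_ne_top hKt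
      have hρp : (ENNReal.ofReal (ρ ^ p)).toReal ^ (1/p) = ρ := by
        rw [ENNReal.toReal_ofReal (by positivity), ← Real.rpow_mul hρ.le,
          mul_one_div, div_self (ne_of_gt hp0), Real.rpow_one]
      rw [hρp] at hest
      have habs : |v t| - |v t₀| ≤ |v t - v t₀| := abs_sub_abs_le_abs_sub (v t) (v t₀)
      have hintabs : |∫ s in t₀..t, g s| ≤ ∫ s in t₀..t, |g s| :=
        intervalIntegral.abs_integral_le_integral_abs ht.1.le
      rw [hvdiff] at habs
      linarith
    have hcore := core_lemma p hp _ v K hKtop hbound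
    have h2 := hcore.const_mul (((omegaD d)⁻¹) ^ (p-1))
    rw [mul_zero] at h2
    have hφ : Filter.Tendsto (fun t => |v t| ^ p * ((omegaD d)⁻¹ * ηhat t) ^ (p-1))
        (nhdsWithin (B i) (Set.Iio (B i))) (nhds 0) := by
      apply h2.congr'
      have hm''B : (A i + 3 * B i)/4 < B i := by linarith
      filter_upwards [Ioo_mem_nhdsLT_of_mem
        (show B i ∈ Set.Ioc ((A i + 3 * B i)/4) (B i) from ⟨hm''B, le_refl _⟩)] with t ht
      have hIcc : t ∈ Set.Icc (A i) (B i) := ⟨by linarith [ht.1], ht.2.le⟩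
      rw [hηhat i t hIcc]
      have hbr : etaHatI d p η (A i) (B i) t = ((K t)⁻¹).toReal := by
        rw [etaHatI, if_neg (by push_neg; linarith [ht.1]), if_neg (by push_neg; exact ht.1)]
      rw [hbr, Real.mul_rpow hc00 ENNReal.toReal_nonneg]
      ring
    have hnormt : Filter.Tendsto (fun x : Eucl d => ‖x‖)
        ((Filter.comap (fun x : Eucl d => ‖x‖) (nhdsWithin (B i) (Set.Iio (B i)))) ⊓
          Filter.principal (IOmega d p η a b Ω)) (nhdsWithin (B i) (Set.Iio (B i))) :=
      tendsto_comap.mono_left inf_le_left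
    have hcomp := hφ.comp hnormt
    apply hcomp.congr'
    have hev : ∀ᶠ x in ((Filter.comap (fun x : Eucl d => ‖x‖)
        (nhdsWithin (B i) (Set.Iio (B i)))) ⊓
          Filter.principal (IOmega d p η a b Ω)), x ∈ IOmega d p η a b Ω :=
      Filter.eventually_inf_principal.mpr (Filter.Eventually.of_forall fun x hx => hx)
    filter_upwards [hev] with x hx
    simp only [Function.comp]
    rw [huv x hx.1, hwhat x]


end
end

section
/- Let u ∈ Dom_{r,w}, with radial profile v ∈ Dom_η (u(x) = v(|x|)), and fix i ∈ {1,…,N_η}. If ∫_{a_i}^{(a_i+b_i)/2} (r^{d−1}η(r))^{−1/(p−1)} dr < +∞, then the finite limit lim_{t→a_i^+} v(t) exists in ℝ; consequently v extends to an absolutely continuous function on [a_i,(a_i+b_i)/2] and u ∈ AC_r^d(I_{a_i,(a_i+b_i)/2}). Analogously, if ∫_{(a_i+b_i)/2}^{b_i} (r^{d−1}η(r))^{−1/(p−1)} dr < +∞, then lim_{t→b_i^−} v(t) exists in ℝ and u ∈ AC_r^d(I_{(a_i+b_i)/2,b_i}). -/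
open MeasureTheory Set Filter Topology Metric Function Classical
open scoped ENNReal RealInnerProductSpace

noncomputable section

section AuxLemmas

lemma glue_W11 {v g : ℝ → ℝ} {I : Set ℝ} (h : IsW11loc v g I) {s t : ℝ} (hst : s ≤ t)
    (hsub : Set.Icc s t ⊆ I) :
    MeasureTheory.IntegrableOn g (Set.Icc s t) ∧ v t = v s + ∫ x in s..t, g x := by
  set S : Set ℝ :=
    {x | x ∈ Set.Icc s t ∧ MeasureTheory.IntegrableOn g (Set.Icc s x) ∧
      v x = v s + ∫ u in s..x, g u} with hS
  have hsS : s ∈ S := by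
    refine ⟨⟨le_refl s, hst⟩, ?_, by simp⟩
    rw [Set.Icc_self]
    unfold MeasureTheory.IntegrableOn
    rw [Measure.restrict_eq_zero.mpr (measure_singleton s)]
    exact integrable_zero_measure
  have hbdd : BddAbove S := ⟨t, fun x hx => hx.1.2⟩
  have hne : S.Nonempty := ⟨s, hsS⟩
  set c := sSup S with hc
  have hcmem : c ∈ Set.Icc s t := ⟨le_csSup hbdd hsS, csSup_le hne fun x hx => hx.1.2⟩
  obtain ⟨ε, hε, hIcc, hgint, hv⟩ := h c (hsub hcmem)
  obtain ⟨x, hxS, hxgt⟩ := exists_lt_of_lt_csSup hne (by linarith : c - ε < c)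
  have hxc : x ≤ c := le_csSup hbdd hxS
  have hkey : ∀ y z : ℝ, y ∈ Set.Icc (c-ε) (c+ε) → z ∈ Set.Icc (c-ε) (c+ε) → y ≤ z →
      v z = v y + ∫ u in y..z, g u := by
    intro y z hy hz hyz
    have h1 : IntervalIntegrable g volume (c-ε) z := by
      apply (hgint.mono_set _).intervalIntegrable
      rw [Set.uIcc_of_le hz.1]
      exact Set.Icc_subset_Icc le_rfl hz.2
    have h2 : IntervalIntegrable g volume (c-ε) y := by
      apply (hgint.mono_set _).intervalIntegrable
      rw [Set.uIcc_of_le hy.1]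
      exact Set.Icc_subset_Icc le_rfl hy.2
    have := intervalIntegral.integral_interval_sub_left h1 h2
    rw [hv z hz, hv y hy]
    linarith [this]
  have hintxc : MeasureTheory.IntegrableOn g (Set.Icc x c) := by
    apply hgint.mono_set
    exact Set.Icc_subset_Icc (le_of_lt hxgt) (by linarith)
  have hcS : c ∈ S := by
    refine ⟨hcmem, ?_, ?_⟩
    · rw [← Set.Icc_union_Icc_eq_Icc hxS.1.1 hxc]
      exact hxS.2.1.union hintxc
    · have hvc : v c = v x + ∫ u in x..c, g u :=
        hkey x c ⟨le_of_lt hxgt, by linarith⟩ ⟨by linarith, by linarith⟩ hxc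
      have hi1 : IntervalIntegrable g volume s x := by
        apply (hxS.2.1.mono_set _).intervalIntegrable
        rw [Set.uIcc_of_le hxS.1.1]
      have hi2 : IntervalIntegrable g volume x c := by
        apply (hintxc.mono_set _).intervalIntegrable
        rw [Set.uIcc_of_le hxc]
      rw [hvc, hxS.2.2, ← intervalIntegral.integral_add_adjacent_intervals hi1 hi2]
      ring
  have hct : c = t := by
    by_contra hne'
    have hct : c < t := lt_of_le_of_ne hcmem.2 hne'
    set c' := min t (c + ε) with hc'
    have hcc' : c < c' := lt_min hct (by linarith)
    have hc'mem : c' ∈ Set.Icc s t := ⟨le_trans hcmem.1 (le_of_lt hcc'), min_le_left _ _⟩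
    have hintcc' : MeasureTheory.IntegrableOn g (Set.Icc c c') := by
      apply hgint.mono_set
      exact Set.Icc_subset_Icc (by linarith) (min_le_right _ _)
    have hc'S : c' ∈ S := by
      refine ⟨hc'mem, ?_, ?_⟩
      · rw [← Set.Icc_union_Icc_eq_Icc hcmem.1 (le_of_lt hcc')]
        exact hcS.2.1.union hintcc'
      · have hvc' : v c' = v c + ∫ u in c..c', g u :=
          hkey c c' ⟨by linarith, by linarith⟩ ⟨by linarith, min_le_right _ _⟩ (le_of_lt hcc')
        have hi1 : IntervalIntegrable g volume s c := by
          apply (hcS.2.1.mono_set _).intervalIntegrable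
          rw [Set.uIcc_of_le hcmem.1]
        have hi2 : IntervalIntegrable g volume c c' := by
          apply (hintcc'.mono_set _).intervalIntegrable
          rw [Set.uIcc_of_le (le_of_lt hcc')]
        rw [hvc', hcS.2.2, ← intervalIntegral.integral_add_adjacent_intervals hi1 hi2]
        ring
    exact absurd (le_csSup hbdd hc'S) (not_le.mpr hcc')
  rw [← hct]
  exact ⟨hcS.2.1, hcS.2.2⟩

lemma holder_int {p : ℝ} (hp : 1 < p) (W g : ℝ → ℝ) (s : Set ℝ)
    (hg : AEStronglyMeasurable g (volume.restrict s))
    (hW : AEMeasurable W (volume.restrict s))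
    (hE : (∫⁻ r in s, ENNReal.ofReal (|g r| ^ p * W r)) < ⊤)
    (hrpw : (∫⁻ r in s, rpw p W r) < ⊤) :
    MeasureTheory.IntegrableOn g s := by
  set μ := volume.restrict s with hμ
  have hp0 : (0:ℝ) < p := by linarith
  have hpq : p.HolderConjugate (p / (p-1)) := Real.HolderConjugate.conjExponent hp
  set q := p / (p - 1) with hq
  set F : ℝ → ℝ≥0∞ := fun r => ENNReal.ofReal |g r| * (ENNReal.ofReal (W r)) ^ (1/p) with hF
  set G : ℝ → ℝ≥0∞ := fun r => (ENNReal.ofReal (W r)) ^ (-(1/p)) with hG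
  have hWae : AEMeasurable (fun r => ENNReal.ofReal (W r)) μ := hW.ennreal_ofReal
  have hrpwae : AEMeasurable (rpw p W) μ := by
    exact (ENNReal.continuous_rpow_const.measurable.comp_aemeasurable hWae)
  have hpos : ∀ᵐ r ∂μ, ENNReal.ofReal (W r) ≠ 0 := by
    filter_upwards [ae_lt_top' hrpwae hrpw.ne] with r hr
    intro h0
    rw [rpw, h0, ENNReal.zero_rpow_of_neg (by
      apply div_neg_of_neg_of_pos <;> norm_num; linarith)] at hr
    exact absurd hr (lt_irrefl _)
  have hgae : AEMeasurable (fun r => ENNReal.ofReal |g r|) μ :=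
    (hg.norm.aemeasurable.congr (by filter_upwards with r; rw [Real.norm_eq_abs])).ennreal_ofReal
  have hFae : AEMeasurable F μ :=
    hgae.mul (ENNReal.continuous_rpow_const.measurable.comp_aemeasurable hWae)
  have hGae : AEMeasurable G μ := ENNReal.continuous_rpow_const.measurable.comp_aemeasurable hWae
  have heq : ∀ᵐ r ∂μ, ENNReal.ofReal |g r| = (F * G) r := by
    filter_upwards [hpos] with r hr
    simp only [hF, hG, Pi.mul_apply]
    rw [mul_assoc, ← ENNReal.rpow_add _ _ hr ENNReal.ofReal_ne_top]
    simp
  have hFp : (∫⁻ r, F r ^ p ∂μ) < ⊤ := by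
    have : ∀ r, F r ^ p = ENNReal.ofReal (|g r| ^ p * W r) := by
      intro r
      rw [hF]
      rw [ENNReal.mul_rpow_of_nonneg _ _ (le_of_lt hp0), ← ENNReal.rpow_mul,
        one_div, inv_mul_cancel₀ (ne_of_gt hp0), ENNReal.rpow_one,
        ENNReal.ofReal_mul (Real.rpow_nonneg (abs_nonneg _) _),
        ENNReal.ofReal_rpow_of_nonneg (abs_nonneg _) (le_of_lt hp0)]
    simp only [this]
    exact hE
  have hGq : (∫⁻ r, G r ^ q ∂μ) < ⊤ := by
    have : ∀ r, G r ^ q = rpw p W r := by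
      intro r
      rw [hG, rpw, ← ENNReal.rpow_mul]
      congr 1
      rw [hq]
      field_simp
    simp only [this]
    exact hrpw
  have hbound := ENNReal.lintegral_mul_le_Lp_mul_Lq μ hpq hFae hGae
  have hlt : (∫⁻ r, ENNReal.ofReal |g r| ∂μ) < ⊤ := by
    calc (∫⁻ r, ENNReal.ofReal |g r| ∂μ) = ∫⁻ r, (F * G) r ∂μ := lintegral_congr_ae heq
    _ ≤ (∫⁻ r, F r ^ p ∂μ) ^ (1/p) * (∫⁻ r, G r ^ q ∂μ) ^ (1/q) := hbound
    _ < ⊤ := ENNReal.mul_lt_top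
        (ENNReal.rpow_lt_top_of_nonneg (by positivity) hFp.ne)
        (ENNReal.rpow_lt_top_of_nonneg (one_div_nonneg.mpr hpq.symm.pos.le) hGq.ne)
  refine ⟨hg, ?_⟩
  rw [hasFiniteIntegral_iff_norm]
  simpa [Real.norm_eq_abs] using hlt

lemma extend_AC {v g : ℝ → ℝ} {α β : ℝ} (hαβ : α < β)
    (hloc : ∀ s t : ℝ, α < s → s ≤ t → t < β → v t = v s + ∫ x in s..t, g x)
    (hint : MeasureTheory.IntegrableOn g (Set.Ioo α β)) :
    ∃ vext gext : ℝ → ℝ, MeasureTheory.Integrable gext ∧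
      (∀ c t : ℝ, vext t = vext c + ∫ x in c..t, gext x) ∧
      (∀ t ∈ Set.Ioo α β, vext t = v t) ∧
      Filter.Tendsto v (nhdsWithin α (Set.Ioi α)) (nhds (vext α)) ∧
      Filter.Tendsto v (nhdsWithin β (Set.Iio β)) (nhds (vext β)) := by
  set gext : ℝ → ℝ := (Set.Ioo α β).indicator g with hgext
  have hgi : MeasureTheory.Integrable gext := hint.integrable_indicator measurableSet_Ioo
  set c₀ : ℝ := (α + β) / 2 with hc₀
  have hc₀mem : c₀ ∈ Set.Ioo α β := ⟨by rw [hc₀]; linarith, by rw [hc₀]; linarith⟩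
  set vext : ℝ → ℝ := fun t => v c₀ + ∫ x in c₀..t, gext x with hvext
  have hcont : Continuous vext := continuous_const.add (hgi.continuous_primitive c₀)
  have hform : ∀ c t : ℝ, vext t = vext c + ∫ x in c..t, gext x := by
    intro c t
    have h1 : IntervalIntegrable gext volume c₀ c := hgi.intervalIntegrable
    have h2 : IntervalIntegrable gext volume c t := hgi.intervalIntegrable
    rw [hvext]
    simp only
    rw [← intervalIntegral.integral_add_adjacent_intervals h1 h2]
    ring
  have hagree : ∀ t ∈ Set.Ioo α β, vext t = v t := by
    intro t ht
    have hsub : Set.uIcc c₀ t ⊆ Set.Ioo α β :=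
      Set.ordConnected_Ioo.uIcc_subset hc₀mem ht
    have h1 : ∫ x in c₀..t, gext x = ∫ x in c₀..t, g x :=
      intervalIntegral.integral_congr fun x hx => Set.indicator_of_mem (hsub hx) g
    rw [hvext]
    simp only
    rw [h1]
    rcases le_or_gt c₀ t with h | h
    · rw [hloc c₀ t hc₀mem.1 h ht.2]
    · have := hloc t c₀ ht.1 (le_of_lt h) hc₀mem.2
      rw [intervalIntegral.integral_symm]
      linarith
  have hα : Filter.Tendsto v (nhdsWithin α (Set.Ioi α)) (nhds (vext α)) := by
    have hmem : Set.Ioo α β ∈ nhdsWithin α (Set.Ioi α) :=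
      Ioo_mem_nhdsGT_of_mem ⟨le_refl α, hαβ⟩
    refine Filter.Tendsto.congr' ?_ ((hcont.tendsto α).mono_left nhdsWithin_le_nhds)
    filter_upwards [hmem] with t ht using hagree t ht
  have hβ : Filter.Tendsto v (nhdsWithin β (Set.Iio β)) (nhds (vext β)) := by
    have hmem : Set.Ioo α β ∈ nhdsWithin β (Set.Iio β) :=
      Ioo_mem_nhdsLT_of_mem ⟨hαβ, le_refl β⟩
    refine Filter.Tendsto.congr' ?_ ((hcont.tendsto β).mono_left nhdsWithin_le_nhds)
    filter_upwards [hmem] with t ht using hagree t ht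
  exact ⟨vext, gext, hgi, hform, hagree, hα, hβ⟩

lemma main_side {d : ℕ} {p : ℝ} (hp : 1 < p) {η v g : ℝ → ℝ} {a b : ℝ}
    (hη : AEStronglyMeasurable η (volume : Measure ℝ))
    (hW11 : IsW11loc v g (degSet p η a b))
    (hE : energy1D d p η g (degSet p η a b) < ⊤)
    {α β : ℝ} (hαβ : α < β) (hsub : Set.Ioo α β ⊆ degSet p η a b)
    (hfin : (∫⁻ r in Set.Ioo α β, rpw p (fun s => s ^ ((d : ℝ) - 1) * η s) r) < ⊤) :
    ∃ vext gext : ℝ → ℝ, MeasureTheory.Integrable gext ∧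
      (∀ c t : ℝ, vext t = vext c + ∫ x in c..t, gext x) ∧
      (∀ t ∈ Set.Ioo α β, vext t = v t) ∧
      Filter.Tendsto v (nhdsWithin α (Set.Ioi α)) (nhds (vext α)) ∧
      Filter.Tendsto v (nhdsWithin β (Set.Iio β)) (nhds (vext β)) := by
  have hglue : ∀ s t : ℝ, α < s → s ≤ t → t < β →
      MeasureTheory.IntegrableOn g (Set.Icc s t) ∧ v t = v s + ∫ x in s..t, g x := by
    intro s t hs hst ht
    exact glue_W11 hW11 hst ((Set.Icc_subset_Ioo hs ht).trans hsub)
  have hglue' : ∀ n : ℕ, MeasureTheory.IntegrableOn g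
      (Set.Icc (α + (β - α)/(n+2)) (β - (β - α)/(n+2))) := by
    intro n
    have he0 : (0:ℝ) < (β - α)/(n+2) := div_pos (by linarith) (by positivity)
    have he2 : (β - α)/(n+2 : ℝ) ≤ (β - α)/2 := by
      rw [div_le_div_iff₀ (by positivity) (by norm_num)]
      nlinarith [Nat.cast_nonneg (α := ℝ) n]
    exact (hglue _ _ (by linarith) (by linarith) (by linarith)).1
  have hunion : Set.Ioo α β = ⋃ n : ℕ, Set.Icc (α + (β - α)/(n+2)) (β - (β - α)/(n+2)) := by
    ext r
    simp only [Set.mem_Ioo, Set.mem_iUnion, Set.mem_Icc]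
    constructor
    · rintro ⟨h1, h2⟩
      set δ := min (r - α) (β - r) with hδ
      have hδpos : 0 < δ := lt_min (by linarith) (by linarith)
      obtain ⟨n, hn⟩ := exists_nat_gt ((β - α)/δ)
      have hn2 : β - α < (n + 2 : ℝ) * δ := by
        have h3 : (β - α)/δ < (n + 2 : ℝ) := lt_of_lt_of_le hn (by linarith)
        calc β - α = ((β - α)/δ) * δ := by field_simp
        _ < (n + 2 : ℝ) * δ := by exact mul_lt_mul_of_pos_right h3 hδpos
      have h4 : (β - α)/(n+2 : ℝ) ≤ δ := by
        rw [div_le_iff₀ (by positivity)]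
        linarith
      refine ⟨n, ?_, ?_⟩
      · have := min_le_left (r - α) (β - r); linarith
      · have := min_le_right (r - α) (β - r); linarith
    · rintro ⟨n, h1, h2⟩
      have hpos : 0 < (β - α)/(n+2 : ℝ) := div_pos (by linarith) (by positivity)
      exact ⟨by linarith, by linarith⟩
  have hpos0 : 0 < (β - α) := by linarith
  have hunion' : Set.Ioo α β = ⋃ n : ℕ, Set.Icc (α + (β - α)/(n+2)) (β - (β - α)/(n+2)) :=
    hunion
  have hgmeas : AEStronglyMeasurable g (volume.restrict (Set.Ioo α β)) := by
    rw [hunion', aestronglyMeasurable_iUnion_iff]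
    intro n
    exact (hglue' n).aestronglyMeasurable
  have hWmeas : AEMeasurable (fun r : ℝ => r ^ ((d : ℝ) - 1) * η r)
      (volume.restrict (Set.Ioo α β)) :=
    ((measurable_id.pow measurable_const).aemeasurable.mul hη.aemeasurable).restrict
  have hE2 : (∫⁻ r in Set.Ioo α β,
      ENNReal.ofReal (|g r| ^ p * (r ^ ((d : ℝ) - 1) * η r))) < ⊤ := by
    refine lt_of_le_of_lt ?_ hE
    rw [energy1D]
    have heq : ∀ r : ℝ, |g r| ^ p * (r ^ ((d : ℝ) - 1) * η r)
        = r ^ ((d : ℝ) - 1) * |g r| ^ p * η r := fun r => by ring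
    simp only [heq]
    exact lintegral_mono_set hsub
  have hint : MeasureTheory.IntegrableOn g (Set.Ioo α β) :=
    holder_int hp (fun r => r ^ ((d : ℝ) - 1) * η r) g (Set.Ioo α β) hgmeas hWmeas hE2 hfin
  exact extend_AC hαβ (fun s t hs hst ht => (hglue s t hs hst ht).2) hint

end AuxLemmas

theorem statement_10
    (d : ℕ) (hd : 1 ≤ d) (p : ℝ) (hp : 1 < p)
    (a b : ℝ) (ha : 0 ≤ a) (hab : a < b)
    (Ω : Set (Eucl d))
    (hΩ : Ω = {x : Eucl d | ‖x‖ < b} ∨ Ω = {x : Eucl d | a < ‖x‖ ∧ ‖x‖ < b})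
    (η : ℝ → ℝ) (hη0 : ∀ᵐ r ∂(volume : Measure ℝ), 0 ≤ η r)
    (hη1 : MeasureTheory.LocallyIntegrable η)
    (hηsupp : Function.support η ⊆ Set.Ioo a b)
    (w : Eucl d → ℝ) (hw : ∀ x, w x = η ‖x‖)
    (ι : Type) [Countable ι] [Nonempty ι] (A B : ι → ℝ)
    (hABlt : ∀ i, A i < B i) (hABsub : ∀ i, a ≤ A i ∧ B i ≤ b)
    (hdisj : Pairwise (Function.onFun Disjoint fun i => Set.Ioo (A i) (B i)))
    (hdec : degSet p η a b = ⋃ i, Set.Ioo (A i) (B i))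
    (u : Eucl d → ℝ) (v g : ℝ → ℝ) (hu : MemDomR d p η a b Ω u v g) (i : ι) :
    ((∫⁻ r in Set.Ioo (A i) ((A i + B i) / 2),
        rpw p (fun s => s ^ ((d : ℝ) - 1) * η s) r) < ⊤ →
      ∃ L : ℝ, Filter.Tendsto v (nhdsWithin (A i) (Set.Ioi (A i))) (nhds L) ∧
        ∃ vext gext : ℝ → ℝ,
          MeasureTheory.IntegrableOn gext (Set.Icc (A i) ((A i + B i) / 2)) ∧
          (∀ t ∈ Set.Icc (A i) ((A i + B i) / 2),
            vext t = vext (A i) + ∫ s in (A i)..t, gext s) ∧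
          (∀ t ∈ Set.Ioo (A i) ((A i + B i) / 2), vext t = v t) ∧
          (∀ x ∈ ann d (IOmega d p η a b Ω) (A i) ((A i + B i) / 2), u x = vext ‖x‖)) ∧
    ((∫⁻ r in Set.Ioo ((A i + B i) / 2) (B i),
        rpw p (fun s => s ^ ((d : ℝ) - 1) * η s) r) < ⊤ →
      ∃ L : ℝ, Filter.Tendsto v (nhdsWithin (B i) (Set.Iio (B i))) (nhds L) ∧
        ∃ vext gext : ℝ → ℝ,
          MeasureTheory.IntegrableOn gext (Set.Icc ((A i + B i) / 2) (B i)) ∧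
          (∀ t ∈ Set.Icc ((A i + B i) / 2) (B i),
            vext t = vext ((A i + B i) / 2) + ∫ s in ((A i + B i) / 2)..t, gext s) ∧
          (∀ t ∈ Set.Ioo ((A i + B i) / 2) (B i), vext t = v t) ∧
          (∀ x ∈ ann d (IOmega d p η a b Ω) ((A i + B i) / 2) (B i), u x = vext ‖x‖)) := by
  obtain ⟨humeas, hW11, hEfin, hrad⟩ := hu
  have hη := hη1.aestronglyMeasurable
  have hm1 : A i < (A i + B i)/2 := by linarith [hABlt i]
  have hm2 : (A i + B i)/2 < B i := by linarith [hABlt i]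
  have hsubdeg : Set.Ioo (A i) (B i) ⊆ degSet p η a b := by
    rw [hdec]; exact Set.subset_iUnion (fun j => Set.Ioo (A j) (B j)) i
  constructor
  · intro hfin
    obtain ⟨vext, gext, hgi, hform, hagree, hL, hR⟩ :=
      main_side hp hη hW11 hEfin hm1
        ((Set.Ioo_subset_Ioo_right hm2.le).trans hsubdeg) hfin
    refine ⟨vext (A i), hL, vext, gext, hgi.integrableOn, fun t _ => hform (A i) t, hagree, ?_⟩
    intro x hx
    rw [hrad x hx.1.1, hagree ‖x‖ ⟨hx.2.1, hx.2.2⟩]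
  · intro hfin
    obtain ⟨vext, gext, hgi, hform, hagree, hL, hR⟩ :=
      main_side hp hη hW11 hEfin hm2
        ((Set.Ioo_subset_Ioo_left hm1.le).trans hsubdeg) hfin
    refine ⟨vext (B i), hR, vext, gext, hgi.integrableOn,
      fun t _ => hform ((A i + B i)/2) t, hagree, ?_⟩
    intro x hx
    rw [hrad x hx.1.1, hagree ‖x‖ ⟨hx.2.1, hx.2.2⟩]

end
end

section
/- Gradient formula for the auxiliary weight: fix i ∈ {1,…,N_η}. For a.e. x ∈ I_{a_i,(3a_i+b_i)/4} the weight ŵ_p is differentiable at x with ∂ŵ_p/∂x_j (x) = ω_d (ŵ_p(x))^2 (|x|^{d−1} w(x))^{−1/(p−1)} x_j/|x| for j = 1,…,d, and for a.e. x ∈ I_{(a_i+3b_i)/4,b_i} it is differentiable with ∂ŵ_p/∂x_j (x) = −ω_d (ŵ_p(x))^2 (|x|^{d−1} w(x))^{−1/(p−1)} x_j/|x|. -/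
open MeasureTheory Set Filter Topology Metric Function Classical
open scoped ENNReal RealInnerProductSpace

noncomputable section

lemma aux_ae_hasDerivAt_primitive (f : ℝ → ℝ) (hf : Integrable f) (c : ℝ) :
    ∀ᵐ t ∂(volume : Measure ℝ), HasDerivAt (fun u => ∫ s in c..u, f s) (f t) t := by
  filter_upwards [IsUnifLocDoublingMeasure.ae_tendsto_average_norm_sub (volume : Measure ℝ)
    hf.locallyIntegrable 1] with t ht
  rw [hasDerivAt_iff_tendsto_slope]
  have hδ : Tendsto (fun u : ℝ => |u - t| / 2) (𝓝[≠] t) (𝓝[>] (0:ℝ)) := by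
    rw [tendsto_nhdsWithin_iff]
    constructor
    · have h0 : Tendsto (fun u : ℝ => |u - t| / 2) (𝓝 t) (𝓝 (|t - t| / 2)) :=
        (((continuous_id.sub continuous_const).abs).div_const 2).tendsto t
      simpa using h0.mono_left nhdsWithin_le_nhds
    · filter_upwards [self_mem_nhdsWithin] with u hu
      have h1 : u - t ≠ 0 := sub_ne_zero.2 hu
      have : (0:ℝ) < |u - t| / 2 := by positivity
      simpa using this
  have hmem : ∀ᶠ u in (𝓝[≠] t), t ∈ closedBall ((t + u) / 2) (1 * (|u - t| / 2)) := by
    filter_upwards with u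
    simp only [mem_closedBall, one_mul, Real.dist_eq]
    have h : t - (t + u) / 2 = (t - u) / 2 := by ring
    rw [h, abs_div, abs_sub_comm t u]
    simp [abs_of_nonneg]
  have key := ht (fun u : ℝ => (t + u) / 2) (fun u : ℝ => |u - t| / 2) hδ hmem
  have hint : ∀ x y : ℝ, IntervalIntegrable f volume x y := fun x y => hf.intervalIntegrable
  have hball : ∀ u : ℝ, u ≠ t →
      |slope (fun u => ∫ s in c..u, f s) t u - f t| ≤
        ⨍ y in closedBall ((t + u) / 2) (|u - t| / 2), |f y - f t| := by
    intro u hu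
    have hut : u - t ≠ 0 := sub_ne_zero.2 hu
    have h2 : (∫ s in c..u, f s) - (∫ s in c..t, f s) = ∫ s in t..u, f s :=
      intervalIntegral.integral_interval_sub_left (hint c u) (hint c t)
    have h1 : slope (fun u => ∫ s in c..u, f s) t u - f t
        = (u - t)⁻¹ * (∫ s in t..u, (f s - f t)) := by
      rw [slope_def_field,
        intervalIntegral.integral_sub (hint t u) intervalIntegrable_const,
        intervalIntegral.integral_const, ← h2, smul_eq_mul]
      field_simp
    have hIcc : Set.uIoc t u ⊆ closedBall ((t + u) / 2) (|u - t| / 2) := by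
      intro y hy
      simp only [mem_closedBall, Real.dist_eq]
      rcases le_total t u with h | h
      · rw [uIoc_of_le h] at hy
        have h1' := hy.1; have h2' := hy.2
        rw [abs_of_nonneg (by linarith : (0:ℝ) ≤ u - t), abs_le]
        constructor <;> [linarith; linarith]
      · rw [uIoc_of_ge h] at hy
        have h1' := hy.1; have h2' := hy.2
        rw [abs_of_nonpos (by linarith : u - t ≤ 0), abs_le]
        constructor <;> [linarith; linarith]
    have hintb : IntegrableOn (fun y => |f y - f t|)
        (closedBall ((t + u) / 2) (|u - t| / 2)) volume :=
      (hf.integrableOn.sub (integrableOn_const measure_closedBall_lt_top.ne)).abs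
    have h3 : |∫ s in t..u, (f s - f t)| ≤ ∫ y in Set.uIoc t u, |f y - f t| := by
      simpa [Real.norm_eq_abs] using
        intervalIntegral.norm_integral_le_integral_norm_uIoc (f := fun s => f s - f t)
          (a := t) (b := u) (μ := volume)
    have h4 : (∫ y in Set.uIoc t u, |f y - f t|) ≤
        ∫ y in closedBall ((t + u) / 2) (|u - t| / 2), |f y - f t| := by
      apply setIntegral_mono_set hintb
      · filter_upwards with y using abs_nonneg _
      · exact HasSubset.Subset.eventuallyLE hIcc
    have hvol : (volume (closedBall ((t + u) / 2) (|u - t| / 2))).toReal = |u - t| := by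
      rw [Real.volume_closedBall, ENNReal.toReal_ofReal (by positivity)]
      ring
    rw [h1]
    calc |(u - t)⁻¹ * ∫ s in t..u, (f s - f t)|
        = |u - t|⁻¹ * |∫ s in t..u, (f s - f t)| := by rw [abs_mul, abs_inv]
      _ ≤ |u - t|⁻¹ * ∫ y in closedBall ((t + u) / 2) (|u - t| / 2), |f y - f t| :=
          mul_le_mul_of_nonneg_left (h3.trans h4) (by positivity)
      _ = ⨍ y in closedBall ((t + u) / 2) (|u - t| / 2), |f y - f t| := by
          rw [setAverage_eq, smul_eq_mul, measureReal_def, hvol]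
  rw [tendsto_iff_dist_tendsto_zero]
  apply squeeze_zero' (g := fun u : ℝ =>
    ⨍ y in closedBall ((t + u) / 2) (|u - t| / 2), ‖f y - f t‖)
  · filter_upwards with u using dist_nonneg
  · filter_upwards [self_mem_nhdsWithin] with u hu
    rw [Real.dist_eq]
    simpa [Real.norm_eq_abs] using hball u hu
  · exact key

lemma aux_ae_hasDerivAt_inv (g G : ℝ → ℝ) (c' e' : ℝ)
    (hg : IntegrableOn g (Set.Icc c' e') volume)
    (hG : ∀ t ∈ Set.Icc c' e', G t = G c' - ∫ s in c'..t, g s)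
    (hGne : ∀ t ∈ Set.Ioo c' e', G t ≠ 0) :
    ∀ᵐ t ∂(volume : Measure ℝ), t ∈ Set.Ioo c' e' →
      HasDerivAt (fun u => (G u)⁻¹) (g t * ((G t)⁻¹) ^ 2) t := by
  set g' : ℝ → ℝ := (Set.Icc c' e').indicator g with hg'
  have hgi : Integrable g' := (integrable_indicator_iff measurableSet_Icc).2 hg
  filter_upwards [aux_ae_hasDerivAt_primitive g' hgi c'] with t hder ht
  have hIccmem : Set.Icc c' e' ∈ 𝓝 t := by
    apply mem_of_superset (isOpen_Ioo.mem_nhds ht) Set.Ioo_subset_Icc_self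
  have hGP : ∀ u ∈ Set.Icc c' e', G u = G c' - ∫ s in c'..u, g' s := by
    intro u hu
    rw [hG u hu]
    congr 1
    apply intervalIntegral.integral_congr
    intro s hs
    have hsub : Set.uIcc c' u ⊆ Set.Icc c' e' := by
      rw [Set.uIcc_of_le hu.1]
      exact Set.Icc_subset_Icc le_rfl hu.2
    rw [hg', Set.indicator_of_mem (hsub hs)]
  have hP : HasDerivAt (fun u => G c' - ∫ s in c'..u, g' s) (-(g' t)) t :=
    (hder.const_sub (G c'))
  have hGt : HasDerivAt G (-(g t)) t := by
    have heq : (fun u => G c' - ∫ s in c'..u, g' s) =ᶠ[𝓝 t] G := by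
      filter_upwards [hIccmem] with u hu
      rw [hGP u hu]
    have := hP.congr_of_eventuallyEq heq.symm
    rwa [hg', Set.indicator_of_mem (Set.Ioo_subset_Icc_self ht)] at this
  have hinv := hGt.inv (hGne t ht)
  rw [neg_neg, div_eq_mul_inv, ← inv_pow] at hinv
  exact hinv

lemma aux_lintegral_finite_on_compact (f : ℝ → ℝ≥0∞) {c e : ℝ}
    (hU : ∀ r ∈ Set.Icc c e, ∃ ε > 0,
      (∫⁻ s in Set.Ioo (r - ε) (r + ε) ∩ Set.Icc c e, f s) < ⊤) :
    (∫⁻ s in Set.Icc c e, f s) < ⊤ := by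
  choose! ε hε hint using hU
  obtain ⟨T, hTs, hT⟩ := (isCompact_Icc : IsCompact (Set.Icc c e)).elim_nhds_subcover
    (fun r => Set.Ioo (r - ε r) (r + ε r))
    (fun r hr => Ioo_mem_nhds (by linarith [hε r hr]) (by linarith [hε r hr]))
  have hsub : Set.Icc c e ⊆ ⋃ r ∈ T, (Set.Ioo (r - ε r) (r + ε r) ∩ Set.Icc c e) := by
    intro x hx
    obtain ⟨r, hrT, hxr⟩ := Set.mem_iUnion₂.1 (hT hx)
    exact Set.mem_iUnion₂.2 ⟨r, hrT, hxr, hx⟩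
  calc (∫⁻ s in Set.Icc c e, f s)
      ≤ ∫⁻ s in ⋃ r ∈ T, (Set.Ioo (r - ε r) (r + ε r) ∩ Set.Icc c e), f s :=
        lintegral_mono' (Measure.restrict_mono hsub le_rfl) le_rfl
    _ = ∫⁻ s in ⋃ r : {x // x ∈ T}, (Set.Ioo (r.1 - ε r.1) (r.1 + ε r.1) ∩ Set.Icc c e), f s := by
        rw [← Finset.set_biUnion_coe, Set.biUnion_eq_iUnion]; rfl
    _ ≤ ∑' r : {x // x ∈ T}, ∫⁻ s in (Set.Ioo (r.1 - ε r.1) (r.1 + ε r.1) ∩ Set.Icc c e), f s :=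
        lintegral_iUnion_le _ _
    _ < ⊤ := by
        rw [tsum_fintype]
        apply ENNReal.sum_lt_top.2
        intro r _
        exact hint r.1 (hTs r.1 r.2)

lemma aux_norm_preimage_null (d : ℕ) (hd : 1 ≤ d) (N : Set ℝ) (R : ℝ)
    (hNm : MeasurableSet N) (hN0 : N ⊆ Set.Ioo 0 R) (hN : volume N = 0) :
    volume {x : Eucl d | ‖x‖ ∈ N} = 0 := by
  haveI : Nonempty (Fin d) := ⟨⟨0, hd⟩⟩
  haveI : Nontrivial (Eucl d) := inferInstance
  set f : ℝ → ℝ := N.indicator (fun _ => 1) with hf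
  set S : Set (Eucl d) := {x : Eucl d | ‖x‖ ∈ N} with hS
  have hSm : MeasurableSet S := measurable_norm hNm
  have hSsub : S ⊆ Metric.ball (0 : Eucl d) R := by
    intro x hx
    have := hN0 hx
    simpa [mem_ball_zero_iff] using this.2
  have hSfin : volume S < ⊤ :=
    lt_of_le_of_lt (measure_mono hSsub) measure_ball_lt_top
  have hint : Integrable (fun x : Eucl d => f ‖x‖) := by
    have : (fun x : Eucl d => f ‖x‖) = S.indicator (fun _ => 1) := by
      funext x
      by_cases h : ‖x‖ ∈ N
      · rw [hf, Set.indicator_of_mem h, Set.indicator_of_mem (show x ∈ S from h)]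
      · rw [hf, Set.indicator_of_notMem h, Set.indicator_of_notMem (show x ∉ S from h)]
    rw [this]
    exact (integrable_indicator_iff hSm).2 (integrableOn_const hSfin.ne)
  have hL : ∫ x : Eucl d, f ‖x‖ = 0 := by
    rw [integral_fun_norm_addHaar (volume : Measure (Eucl d)) f]
    have h0 : ∫ y in Set.Ioi (0:ℝ), y ^ (Module.finrank ℝ (Eucl d) - 1) • f y = 0 := by
      apply integral_eq_zero_of_ae
      have hae : ∀ᵐ y ∂(volume : Measure ℝ), y ∉ N := by
        rw [ae_iff]
        simpa using hN
      filter_upwards [ae_restrict_of_ae hae] with y hy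
      simp [hf, Set.indicator_of_notMem hy, hy]
    rw [h0, smul_zero, smul_zero]
  have hLS : ∫ x : Eucl d, f ‖x‖ = (volume S).toReal := by
    have : (fun x : Eucl d => f ‖x‖) = S.indicator (fun _ => (1:ℝ)) := by
      funext x
      by_cases h : ‖x‖ ∈ N
      · rw [hf, Set.indicator_of_mem h, Set.indicator_of_mem (show x ∈ S from h)]
      · rw [hf, Set.indicator_of_notMem h, Set.indicator_of_notMem (show x ∉ S from h)]
    rw [this, integral_indicator_const (1:ℝ) hSm, smul_eq_mul, mul_one, measureReal_def]
  rw [hL] at hLS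
  have := hLS.symm
  rw [ENNReal.toReal_eq_zero_iff] at this
  rcases this with h | h
  · exact h
  · exact absurd h hSfin.ne

lemma aux_hasFDerivAt_norm {E : Type*} [NormedAddCommGroup E] [InnerProductSpace ℝ E]
    {x : E} (hx : x ≠ 0) :
    HasFDerivAt (fun y : E => ‖y‖) (‖x‖⁻¹ • innerSL ℝ x) x := by
  have h1 : HasFDerivAt (fun y : E => ‖y‖ ^ 2) ((2:ℕ) • innerSL ℝ x) x :=
    (hasStrictFDerivAt_norm_sq x).hasFDerivAt
  have hx2 : (0:ℝ) < ‖x‖ := norm_pos_iff.2 hx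
  have h2 : HasDerivAt Real.sqrt (1 / (2 * Real.sqrt (‖x‖ ^ 2))) (‖x‖ ^ 2) :=
    Real.hasDerivAt_sqrt (by positivity)
  have h3 : HasFDerivAt (fun y : E => Real.sqrt (‖y‖ ^ 2))
      ((1 / (2 * Real.sqrt (‖x‖ ^ 2))) • ((2:ℕ) • innerSL ℝ x)) x :=
    h2.comp_hasFDerivAt x h1
  have h4 : (fun y : E => Real.sqrt (‖y‖ ^ 2)) = fun y : E => ‖y‖ := by
    funext y
    rw [Real.sqrt_sq (norm_nonneg y)]
  rw [h4] at h3
  convert h3 using 1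
  rw [Real.sqrt_sq (norm_nonneg x)]
  ext y
  simp only [ContinuousLinearMap.smul_apply, smul_eq_mul, ContinuousLinearMap.coe_smul',
    Pi.smul_apply, nsmul_eq_mul]
  push_cast
  field_simp

lemma aux_eval (d : ℕ) (c v r : ℝ) (x : Eucl d) (j : Fin d) :
    ((c • (v • (r • innerSL ℝ x))) : Eucl d →L[ℝ] ℝ) (EuclideanSpace.single j 1)
      = c * (v * (r * x j)) := by
  have hinner : (innerSL ℝ x) (EuclideanSpace.single j (1:ℝ)) = x j := by
    simp [EuclideanSpace.inner_single_right]
  simp only [ContinuousLinearMap.coe_smul', Pi.smul_apply, smul_eq_mul, hinner]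

lemma aux_side1 (f : ℝ → ℝ≥0∞) (hfm : AEMeasurable f (volume : Measure ℝ))
    (hf0 : ∀ s, f s ≠ 0) (Ai m q : ℝ) (hAiq : Ai < q) (hqm : q < m)
    (hfin : ∀ c e : ℝ, Ai < c → e ≤ m → (∫⁻ s in Set.Icc c e, f s) < ⊤) :
    ∀ᵐ t ∂(volume : Measure ℝ), t ∈ Set.Ioo Ai q →
      HasDerivAt (fun u => ((∫⁻ s in Set.Ioo u m, f s)⁻¹).toReal)
        ((f t).toReal * (((∫⁻ s in Set.Ioo t m, f s)⁻¹).toReal) ^ 2) t := by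
  set F : ℝ → ℝ≥0∞ := fun t => ∫⁻ s in Set.Ioo t m, f s with hF
  set G : ℝ → ℝ := fun t => (F t).toReal with hG
  set g : ℝ → ℝ := fun s => (f s).toReal with hg
  have hφ : (fun u => ((∫⁻ s in Set.Ioo u m, f s)⁻¹).toReal) = fun u => (G u)⁻¹ := by
    funext u; rw [ENNReal.toReal_inv]
  set c' : ℕ → ℝ := fun n => Ai + (q - Ai) / (n + 2) with hc'
  set e' : ℕ → ℝ := fun n => q - (q - Ai) / (n + 2) with he'
  have hr : ∀ n : ℕ, 0 < (q - Ai) / (n + 2) ∧ (q - Ai) / (n + 2) ≤ (q - Ai) / 2 := by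
    intro n
    have h2 : (0:ℝ) < (n:ℝ) + 2 := by positivity
    constructor
    · apply div_pos (by linarith) h2
    · apply div_le_div_of_nonneg_left (by linarith) (by norm_num) (by linarith)
  have key : ∀ n : ℕ, ∀ᵐ t ∂(volume : Measure ℝ), t ∈ Set.Ioo (c' n) (e' n) →
      HasDerivAt (fun u => (G u)⁻¹) (g t * ((G t)⁻¹) ^ 2) t := by
    intro n
    obtain ⟨hr1, hr2⟩ := hr n
    have hc1 : Ai < c' n := by rw [hc']; simp only; linarith
    have heq' : e' n < q := by rw [he']; simp only; linarith
    have hce : ∀ t, t ∈ Set.Icc (c' n) (e' n) → t < m := by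
      intro t ht
      have := ht.2
      rw [he'] at this; simp only at this
      linarith
    have hFfin : ∀ t, c' n ≤ t → F t < ⊤ := by
      intro t ht
      apply lt_of_le_of_lt _ (hfin (c' n) m hc1 le_rfl)
      apply lintegral_mono' (Measure.restrict_mono _ le_rfl) le_rfl
      intro s hs
      exact ⟨le_trans ht hs.1.le, hs.2.le⟩
    have hIccfin : (∫⁻ s in Set.Icc (c' n) (e' n), f s) < ⊤ :=
      hfin (c' n) (e' n) hc1 (by linarith)
    have hg_int : IntegrableOn g (Set.Icc (c' n) (e' n)) volume :=
      integrable_toReal_of_lintegral_ne_top (hfm.restrict) hIccfin.ne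
    have hGid : ∀ t ∈ Set.Icc (c' n) (e' n), G t = G (c' n) - ∫ s in (c' n)..t, g s := by
      intro t ht
      have hIocfin : (∫⁻ s in Set.Ioc (c' n) t, f s) < ⊤ := by
        apply lt_of_le_of_lt _ hIccfin
        apply lintegral_mono' (Measure.restrict_mono _ le_rfl) le_rfl
        exact fun s hs => ⟨hs.1.le, le_trans hs.2 ht.2⟩
      have hdisj : Disjoint (Set.Ioc (c' n) t) (Set.Ioo t m) := by
        rw [Set.disjoint_left]
        rintro s ⟨_, h1⟩ ⟨h2, _⟩
        linarith
      have hsplit : F (c' n) = (∫⁻ s in Set.Ioc (c' n) t, f s) + F t := by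
        rw [hF]; simp only
        rw [← lintegral_union measurableSet_Ioo hdisj,
          Set.Ioc_union_Ioo_eq_Ioo ht.1 (hce t ht)]
      have h2 : (∫⁻ s in Set.Ioc (c' n) t, f s).toReal = ∫ s in (c' n)..t, g s := by
        rw [intervalIntegral.integral_of_le ht.1]
        rw [← integral_toReal (hfm.restrict) (ae_lt_top' (hfm.restrict) hIocfin.ne)]
      have h3 : G (c' n) = (∫⁻ s in Set.Ioc (c' n) t, f s).toReal + G t := by
        rw [hG]; simp only
        rw [hsplit, ENNReal.toReal_add hIocfin.ne (hFfin t ht.1).ne]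
      rw [← h2]
      linarith [h3]
    have hGne : ∀ t ∈ Set.Ioo (c' n) (e' n), G t ≠ 0 := by
      intro t ht
      have htm : t < m := hce t (Set.Ioo_subset_Icc_self ht)
      have hFne : F t ≠ 0 := by
        intro h0
        have h1 := (lintegral_eq_zero_iff' (hfm.restrict)).1 h0
        have h2 : (volume.restrict (Set.Ioo t m)) {s | ¬ f s = 0} = 0 := by
          rw [EventuallyEq, ae_iff] at h1
          simpa using h1
        have h3 : {s : ℝ | ¬ f s = 0} = Set.univ := Set.eq_univ_of_forall hf0
        rw [h3, Measure.restrict_apply_univ, Real.volume_Ioo] at h2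
        exact (ENNReal.ofReal_pos.2 (by linarith)).ne' h2
      exact ENNReal.toReal_ne_zero.2 ⟨hFne, (hFfin t ht.1.le).ne⟩
    exact aux_ae_hasDerivAt_inv g G (c' n) (e' n) hg_int hGid hGne
  filter_upwards [ae_all_iff.2 key] with t hkey ht
  set δ : ℝ := min (t - Ai) (q - t) with hδdef
  have hδ : 0 < δ := lt_min (by linarith [ht.1]) (by linarith [ht.2])
  obtain ⟨nn, hn⟩ := exists_nat_gt ((q - Ai) / δ)
  have hlt : (q - Ai) / (nn + 2) < δ := by
    have h2 : (q - Ai) / δ < (nn : ℝ) + 2 := by push_cast at hn ⊢; linarith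
    rw [div_lt_iff₀ hδ] at h2
    rw [div_lt_iff₀ (by positivity)]
    linarith
  have htn : t ∈ Set.Ioo (c' nn) (e' nn) := by
    constructor
    · rw [hc']; simp only
      have := min_le_left (t - Ai) (q - t)
      linarith
    · rw [he']; simp only
      have := min_le_right (t - Ai) (q - t)
      linarith
  have h := hkey nn htn
  rw [hφ, ENNReal.toReal_inv]
  exact h

lemma aux_side2 (f : ℝ → ℝ≥0∞) (hfm : AEMeasurable f (volume : Measure ℝ))
    (hf0 : ∀ s, f s ≠ 0) (m q' Bi : ℝ) (hmq' : m < q') (hq'B : q' < Bi)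
    (hfin : ∀ c e : ℝ, m ≤ c → e < Bi → (∫⁻ s in Set.Icc c e, f s) < ⊤) :
    ∀ᵐ t ∂(volume : Measure ℝ), t ∈ Set.Ioo q' Bi →
      HasDerivAt (fun u => ((∫⁻ s in Set.Ioo m u, f s)⁻¹).toReal)
        (-((f t).toReal * (((∫⁻ s in Set.Ioo m t, f s)⁻¹).toReal) ^ 2)) t := by
  set F : ℝ → ℝ≥0∞ := fun t => ∫⁻ s in Set.Ioo m t, f s with hF
  set G : ℝ → ℝ := fun t => (F t).toReal with hG
  set g : ℝ → ℝ := fun s => -(f s).toReal with hg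
  have hφ : (fun u => ((∫⁻ s in Set.Ioo m u, f s)⁻¹).toReal) = fun u => (G u)⁻¹ := by
    funext u; rw [ENNReal.toReal_inv]
  set c' : ℕ → ℝ := fun n => q' + (Bi - q') / (n + 2) with hc'
  set e' : ℕ → ℝ := fun n => Bi - (Bi - q') / (n + 2) with he'
  have hr : ∀ n : ℕ, 0 < (Bi - q') / (n + 2) ∧ (Bi - q') / (n + 2) ≤ (Bi - q') / 2 := by
    intro n
    have h2 : (0:ℝ) < (n:ℝ) + 2 := by positivity
    constructor
    · apply div_pos (by linarith) h2
    · apply div_le_div_of_nonneg_left (by linarith) (by norm_num) (by linarith)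
  have key : ∀ n : ℕ, ∀ᵐ t ∂(volume : Measure ℝ), t ∈ Set.Ioo (c' n) (e' n) →
      HasDerivAt (fun u => (G u)⁻¹) (g t * ((G t)⁻¹) ^ 2) t := by
    intro n
    obtain ⟨hr1, hr2⟩ := hr n
    have hc1 : q' < c' n := by rw [hc']; simp only; linarith
    have heB : e' n < Bi := by rw [he']; simp only; linarith
    have hFfin : ∀ t, t ≤ e' n → F t < ⊤ := by
      intro t ht
      apply lt_of_le_of_lt _ (hfin m (e' n) le_rfl heB)
      apply lintegral_mono' (Measure.restrict_mono _ le_rfl) le_rfl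
      intro s hs
      exact ⟨hs.1.le, le_trans hs.2.le ht⟩
    have hIccfin : (∫⁻ s in Set.Icc (c' n) (e' n), f s) < ⊤ :=
      hfin (c' n) (e' n) (by linarith) heB
    have hg_int : IntegrableOn g (Set.Icc (c' n) (e' n)) volume :=
      (integrable_toReal_of_lintegral_ne_top (hfm.restrict) hIccfin.ne).neg
    have hGid : ∀ t ∈ Set.Icc (c' n) (e' n), G t = G (c' n) - ∫ s in (c' n)..t, g s := by
      intro t ht
      have hIcofin : (∫⁻ s in Set.Ico (c' n) t, f s) < ⊤ := by
        apply lt_of_le_of_lt _ hIccfin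
        apply lintegral_mono' (Measure.restrict_mono _ le_rfl) le_rfl
        exact fun s hs => ⟨hs.1, le_trans hs.2.le ht.2⟩
      have hdisj : Disjoint (Set.Ioo m (c' n)) (Set.Ico (c' n) t) := by
        rw [Set.disjoint_left]
        rintro s ⟨_, h1⟩ ⟨h2, _⟩
        linarith
      have hsplit : F t = F (c' n) + ∫⁻ s in Set.Ico (c' n) t, f s := by
        rw [hF]; simp only
        rw [← lintegral_union measurableSet_Ico hdisj,
          Set.Ioo_union_Ico_eq_Ioo (by linarith : m < c' n) ht.1]
      have h2 : (∫⁻ s in Set.Ico (c' n) t, f s).toReal = ∫ s in Set.Ioo (c' n) t, (f s).toReal := by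
        rw [← integral_toReal (hfm.restrict) (ae_lt_top' (hfm.restrict) hIcofin.ne)]
        rw [integral_Ico_eq_integral_Ioo]
      have h3 : G t = G (c' n) + (∫⁻ s in Set.Ico (c' n) t, f s).toReal := by
        rw [hG]; simp only
        rw [hsplit, ENNReal.toReal_add (hFfin (c' n) (le_trans ht.1 ht.2)).ne hIcofin.ne]
      have h4 : ∫ s in (c' n)..t, g s = -∫ s in Set.Ioo (c' n) t, (f s).toReal := by
        rw [hg]
        rw [intervalIntegral.integral_neg, intervalIntegral.integral_of_le ht.1,
          integral_Ioc_eq_integral_Ioo]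
      rw [h4, h3, h2]
      ring
    have hGne : ∀ t ∈ Set.Ioo (c' n) (e' n), G t ≠ 0 := by
      intro t ht
      have hFne : F t ≠ 0 := by
        intro h0
        have h1 := (lintegral_eq_zero_iff' (hfm.restrict)).1 h0
        have h2 : (volume.restrict (Set.Ioo m t)) {s | ¬ f s = 0} = 0 := by
          rw [EventuallyEq, ae_iff] at h1
          simpa using h1
        have h3 : {s : ℝ | ¬ f s = 0} = Set.univ := Set.eq_univ_of_forall hf0
        rw [h3, Measure.restrict_apply_univ, Real.volume_Ioo] at h2
        have : m < t := by linarith [ht.1]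
        exact (ENNReal.ofReal_pos.2 (by linarith)).ne' h2
      exact ENNReal.toReal_ne_zero.2 ⟨hFne, (hFfin t ht.2.le).ne⟩
    exact aux_ae_hasDerivAt_inv g G (c' n) (e' n) hg_int hGid hGne
  filter_upwards [ae_all_iff.2 key] with t hkey ht
  set δ : ℝ := min (t - q') (Bi - t) with hδdef
  have hδ : 0 < δ := lt_min (by linarith [ht.1]) (by linarith [ht.2])
  obtain ⟨nn, hn⟩ := exists_nat_gt ((Bi - q') / δ)
  have hlt : (Bi - q') / (nn + 2) < δ := by
    have h2 : (Bi - q') / δ < (nn : ℝ) + 2 := by linarith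
    rw [div_lt_iff₀ hδ] at h2
    rw [div_lt_iff₀ (by positivity)]
    linarith
  have htn : t ∈ Set.Ioo (c' nn) (e' nn) := by
    constructor
    · rw [hc']; simp only
      have := min_le_left (t - q') (Bi - t)
      linarith
    · rw [he']; simp only
      have := min_le_right (t - q') (Bi - t)
      linarith
  have h := hkey nn htn
  rw [hφ, ENNReal.toReal_inv]
  have hGeq : g t * ((G t)⁻¹) ^ 2 = -((f t).toReal * ((F t).toReal⁻¹) ^ 2) := by
    rw [hg, hG]
    ring
  rw [hGeq] at h
  exact h


set_option maxHeartbeats 1000000 in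
theorem statement_18
    (d : ℕ) (hd : 1 ≤ d) (p : ℝ) (hp : 1 < p)
    (a b : ℝ) (ha : 0 ≤ a) (hab : a < b)
    (Ω : Set (Eucl d))
    (hΩ : Ω = {x : Eucl d | ‖x‖ < b} ∨ Ω = {x : Eucl d | a < ‖x‖ ∧ ‖x‖ < b})
    (η : ℝ → ℝ) (hη0 : ∀ᵐ r ∂(volume : Measure ℝ), 0 ≤ η r)
    (hη1 : MeasureTheory.LocallyIntegrable η)
    (hηsupp : Function.support η ⊆ Set.Ioo a b)
    (w : Eucl d → ℝ) (hw : ∀ x, w x = η ‖x‖)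
    (ι : Type) [Countable ι] [Nonempty ι] (A B : ι → ℝ)
    (hABlt : ∀ i, A i < B i) (hABsub : ∀ i, a ≤ A i ∧ B i ≤ b)
    (hdisj : Pairwise (Function.onFun Disjoint fun i => Set.Ioo (A i) (B i)))
    (hdec : degSet p η a b = ⋃ i, Set.Ioo (A i) (B i))
    (ηhat : ℝ → ℝ)
    (hηhat : ∀ i, ∀ t ∈ Set.Icc (A i) (B i), ηhat t = etaHatI d p η (A i) (B i) t)
    (hηhat0 : ∀ t ∉ ⋃ i, Set.Icc (A i) (B i), ηhat t = 0)
    (what : Eucl d → ℝ) (hwhat : ∀ x, what x = (omegaD d)⁻¹ * ηhat ‖x‖)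
    (i : ι) :
    (∀ᵐ x ∂(volume : Measure (Eucl d)),
      x ∈ ann d (IOmega d p η a b Ω) (A i) ((3 * A i + B i) / 4) →
      ∃ L : Eucl d →L[ℝ] ℝ, HasFDerivAt what L x ∧ ∀ j : Fin d,
        L (EuclideanSpace.single j 1) =
          omegaD d * what x ^ (2 : ℕ) * (‖x‖ ^ ((d : ℝ) - 1) * w x) ^ (-(1 : ℝ) / (p - 1)) *
            (x j / ‖x‖)) ∧
    (∀ᵐ x ∂(volume : Measure (Eucl d)),
      x ∈ ann d (IOmega d p η a b Ω) ((A i + 3 * B i) / 4) (B i) →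
      ∃ L : Eucl d →L[ℝ] ℝ, HasFDerivAt what L x ∧ ∀ j : Fin d,
        L (EuclideanSpace.single j 1) =
          -(omegaD d * what x ^ (2 : ℕ) * (‖x‖ ^ ((d : ℝ) - 1) * w x) ^ (-(1 : ℝ) / (p - 1)) *
            (x j / ‖x‖))) := by
  have hABi : A i < B i := hABlt i
  have hA0 : 0 ≤ A i := le_trans ha (hABsub i).1
  have hd1 : (0:ℝ) ≤ (d:ℝ) - 1 := by
    have : (1:ℝ) ≤ (d:ℝ) := by exact_mod_cast hd
    linarith
  have hp1 : 0 < p - 1 := by linarith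
  have hexp : -(1:ℝ)/(p-1) < 0 := by
    have h1 : 0 < 1/(p-1) := by positivity
    have h2 : -(1:ℝ)/(p-1) = -(1/(p-1)) := by ring
    linarith [h2 ▸ neg_neg_iff_pos.2 h1]
  -- measurability
  have hηm : AEMeasurable η (volume : Measure ℝ) := hη1.aestronglyMeasurable.aemeasurable
  have hθm : AEMeasurable (fun s : ℝ => s ^ ((d:ℝ)-1) * η s) (volume : Measure ℝ) :=
    ((Real.continuous_rpow_const hd1).measurable.aemeasurable).mul hηm
  have hfm : AEMeasurable (rpw p (fun s : ℝ => s ^ ((d:ℝ)-1) * η s)) (volume : Measure ℝ) := by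
    unfold rpw
    exact (ENNReal.measurable_ofReal.comp_aemeasurable hθm).pow_const _
  have hf0 : ∀ s, rpw p (fun s : ℝ => s ^ ((d:ℝ)-1) * η s) s ≠ 0 := by
    intro s h
    rw [rpw, ENNReal.rpow_eq_zero_iff] at h
    rcases h with ⟨_, h2⟩ | ⟨h1, _⟩
    · linarith
    · exact ENNReal.ofReal_ne_top h1
  -- finiteness on compact subintervals
  have hfin : ∀ c e : ℝ, A i < c → e < B i →
      (∫⁻ s in Set.Icc c e, rpw p (fun s : ℝ => s ^ ((d:ℝ)-1) * η s) s) < ⊤ := by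
    intro c e hc he
    have hc0 : 0 < c := lt_of_le_of_lt hA0 hc
    apply aux_lintegral_finite_on_compact
    intro r hr
    have hrdeg : r ∈ degSet p η a b := by
      rw [hdec]
      exact Set.mem_iUnion.2 ⟨i, lt_of_lt_of_le hc hr.1, lt_of_le_of_lt hr.2 he⟩
    simp only [degSet, Set.mem_setOf_eq] at hrdeg
    obtain ⟨hrab, ε, hε, hsubab, hfinη⟩ := hrdeg
    refine ⟨ε, hε, ?_⟩
    set K : ℝ≥0∞ := (ENNReal.ofReal (c ^ ((d:ℝ)-1)) ^ ((1:ℝ)/(p-1)))⁻¹ with hK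
    have hA' : ENNReal.ofReal (c ^ ((d:ℝ)-1)) ^ ((1:ℝ)/(p-1)) ≠ 0 :=
      (ENNReal.rpow_pos (ENNReal.ofReal_pos.2 (Real.rpow_pos_of_pos hc0 _))
        ENNReal.ofReal_ne_top).ne'
    have hA'' : ENNReal.ofReal (c ^ ((d:ℝ)-1)) ^ ((1:ℝ)/(p-1)) ≠ ⊤ :=
      ENNReal.rpow_ne_top_of_nonneg (by positivity) ENNReal.ofReal_ne_top
    have hKtop : K ≠ ⊤ := by rw [hK, ENNReal.inv_ne_top]; exact hA'
    have hXm : MeasurableSet (Set.Ioo (r - ε) (r + ε) ∩ Set.Icc c e) :=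
      measurableSet_Ioo.inter measurableSet_Icc
    have hmono : ∫⁻ s in Set.Ioo (r - ε) (r + ε) ∩ Set.Icc c e,
        rpw p (fun s : ℝ => s ^ ((d:ℝ)-1) * η s) s ≤
        ∫⁻ s in Set.Ioo (r - ε) (r + ε) ∩ Set.Icc c e, K * rpw p η s := by
      apply lintegral_mono_ae
      filter_upwards [ae_restrict_of_ae hη0, ae_restrict_mem hXm] with s h1 h2
      have hcs : c ≤ s := h2.2.1
      have hs0 : 0 < s := lt_of_lt_of_le hc0 hcs
      have hmul : c ^ ((d:ℝ)-1) * η s ≤ s ^ ((d:ℝ)-1) * η s :=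
        mul_le_mul_of_nonneg_right (Real.rpow_le_rpow hc0.le hcs hd1) h1
      have e2 : -(1:ℝ)/(p-1) = -((1:ℝ)/(p-1)) := by ring
      rw [rpw, rpw, e2, ENNReal.rpow_neg, ENNReal.rpow_neg, hK,
        ← ENNReal.mul_inv (Or.inl hA') (Or.inl hA'')]
      rw [ENNReal.inv_le_inv]
      rw [← ENNReal.mul_rpow_of_ne_top ENNReal.ofReal_ne_top ENNReal.ofReal_ne_top]
      apply ENNReal.rpow_le_rpow _ (by positivity)
      rw [← ENNReal.ofReal_mul (by positivity)]
      exact ENNReal.ofReal_le_ofReal hmul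
    calc (∫⁻ s in Set.Ioo (r - ε) (r + ε) ∩ Set.Icc c e,
          rpw p (fun s : ℝ => s ^ ((d:ℝ)-1) * η s) s)
        ≤ ∫⁻ s in Set.Ioo (r - ε) (r + ε) ∩ Set.Icc c e, K * rpw p η s := hmono
      _ = K * ∫⁻ s in Set.Ioo (r - ε) (r + ε) ∩ Set.Icc c e, rpw p η s :=
          lintegral_const_mul' _ _ hKtop
      _ ≤ K * ∫⁻ s in Set.Ioo (r - ε) (r + ε), rpw p η s := by
          apply mul_le_mul_right
          exact lintegral_mono' (Measure.restrict_mono Set.inter_subset_left le_rfl) le_rfl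
      _ < ⊤ := ENNReal.mul_lt_top hKtop.lt_top hfinη
  -- pointwise identification of the integrand
  have grel : ∀ t : ℝ, 0 < t → 0 ≤ η t →
      (rpw p (fun s : ℝ => s ^ ((d:ℝ)-1) * η s) t).toReal =
        (t ^ ((d:ℝ)-1) * η t) ^ (-(1:ℝ)/(p-1)) := by
    intro t ht hηt
    rcases lt_or_eq_of_le (mul_nonneg (Real.rpow_nonneg ht.le _) hηt) with h | h
    · rw [rpw, ENNReal.ofReal_rpow_of_pos h, ENNReal.toReal_ofReal (Real.rpow_nonneg h.le _)]
    · rw [rpw, ← h, ENNReal.ofReal_zero, ENNReal.zero_rpow_of_neg hexp, ENNReal.toReal_top,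
        Real.zero_rpow hexp.ne]
  have hq : A i < (3 * A i + B i) / 4 := by linarith
  have hqm : (3 * A i + B i) / 4 < (A i + B i) / 2 := by linarith
  have hmB : (A i + B i) / 2 < B i := by linarith
  have hAm : A i < (A i + B i) / 2 := by linarith
  have hmq' : (A i + B i) / 2 < (A i + 3 * B i) / 4 := by linarith
  have hq'B : (A i + 3 * B i) / 4 < B i := by linarith
  have hqB : (3 * A i + B i) / 4 < B i := by linarith
  have hqq' : (3 * A i + B i) / 4 < (A i + 3 * B i) / 4 := by linarith
  have hq'0 : 0 < (A i + 3 * B i) / 4 := by linarith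
  constructor
  · -- side 1
    have hside1 := aux_side1 (rpw p (fun s : ℝ => s ^ ((d:ℝ)-1) * η s)) hfm hf0
      (A i) ((A i + B i) / 2) ((3 * A i + B i) / 4) hq hqm
      (fun c e hc he => hfin c e hc (lt_of_le_of_lt he hmB))
    have hD1 : ∀ᵐ t ∂(volume : Measure ℝ), t ∈ Set.Ioo (A i) ((3 * A i + B i) / 4) →
        (HasDerivAt (fun u => ((∫⁻ s in Set.Ioo u ((A i + B i) / 2),
            rpw p (fun s => s ^ ((d : ℝ) - 1) * η s) s)⁻¹).toReal)
          ((rpw p (fun s : ℝ => s ^ ((d:ℝ)-1) * η s) t).toReal *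
            (((∫⁻ s in Set.Ioo t ((A i + B i) / 2),
              rpw p (fun s => s ^ ((d : ℝ) - 1) * η s) s)⁻¹).toReal) ^ 2) t
          ∧ 0 ≤ η t) := by
      filter_upwards [hside1, hη0] with t h1 h2 ht
      exact ⟨h1 ht, h2⟩
    have hnull1 := ae_iff.1 hD1
    obtain ⟨N₁, hN₁sup, hN₁m, hN₁0⟩ := exists_measurable_superset_of_null hnull1
    have hXnull : volume {x : Eucl d |
        ‖x‖ ∈ N₁ ∩ Set.Ioo (A i) ((3 * A i + B i) / 4)} = 0 :=
      aux_norm_preimage_null d hd _ ((3 * A i + B i) / 4)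
        (hN₁m.inter measurableSet_Ioo)
        (fun t ht => ⟨lt_of_le_of_lt hA0 ht.2.1, ht.2.2⟩)
        (measure_mono_null Set.inter_subset_left hN₁0)
    rw [ae_iff]
    refine measure_mono_null ?_ hXnull
    intro x hx
    simp only [Set.mem_setOf_eq, Classical.not_imp] at hx
    obtain ⟨hxann, hxno⟩ := hx
    simp only [ann, Set.mem_setOf_eq] at hxann
    obtain ⟨hxI, hxl, hxr⟩ := hxann
    refine ⟨?_, hxl, hxr⟩
    by_contra hno
    apply hxno
    have hP : ‖x‖ ∈ Set.Ioo (A i) ((3 * A i + B i) / 4) →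
        (HasDerivAt (fun u => ((∫⁻ s in Set.Ioo u ((A i + B i) / 2),
            rpw p (fun s => s ^ ((d : ℝ) - 1) * η s) s)⁻¹).toReal)
          ((rpw p (fun s : ℝ => s ^ ((d:ℝ)-1) * η s) ‖x‖).toReal *
            (((∫⁻ s in Set.Ioo ‖x‖ ((A i + B i) / 2),
              rpw p (fun s => s ^ ((d : ℝ) - 1) * η s) s)⁻¹).toReal) ^ 2) ‖x‖
          ∧ 0 ≤ η ‖x‖) := by
      by_contra hc
      exact hno (hN₁sup hc)
    obtain ⟨hDer, hηx⟩ := hP ⟨hxl, hxr⟩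
    have hxpos : 0 < ‖x‖ := lt_of_le_of_lt hA0 hxl
    have hx0 : x ≠ 0 := by
      intro h
      rw [h, norm_zero] at hxpos
      exact lt_irrefl _ hxpos
    have hnrm := aux_hasFDerivAt_norm (x := x) hx0
    have hcomp := hDer.comp_hasFDerivAt x hnrm
    have hmul := hcomp.const_mul ((omegaD d)⁻¹)
    have hev : what =ᶠ[𝓝 x] fun y : Eucl d => (omegaD d)⁻¹ *
        ((fun u => ((∫⁻ s in Set.Ioo u ((A i + B i) / 2),
          rpw p (fun s => s ^ ((d : ℝ) - 1) * η s) s)⁻¹).toReal) ∘ fun y : Eucl d => ‖y‖) y := by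
      have hopen : IsOpen {y : Eucl d | ‖y‖ ∈ Set.Ioo (A i) ((3 * A i + B i) / 4)} :=
        isOpen_Ioo.preimage continuous_norm
      filter_upwards [hopen.mem_nhds (show x ∈ _ from ⟨hxl, hxr⟩)] with y hy
      rw [hwhat y, hηhat i ‖y‖ ⟨hy.1.le, le_trans hy.2.le hqB.le⟩]
      simp only [etaHatI, Function.comp]
      rw [if_pos hy.2.le]
    refine ⟨_, hmul.congr_of_eventuallyEq hev, ?_⟩
    intro j
    rw [aux_eval, hw, hwhat, hηhat i ‖x‖ ⟨hxl.le, le_trans hxr.le hqB.le⟩]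
    simp only [etaHatI]
    rw [if_pos hxr.le, ← grel ‖x‖ hxpos hηx]
    set gg := (rpw p (fun s : ℝ => s ^ ((d:ℝ)-1) * η s) ‖x‖).toReal with hgg
    set ff := ((∫⁻ s in Set.Ioo ‖x‖ ((A i + B i) / 2),
      rpw p (fun s => s ^ ((d : ℝ) - 1) * η s) s)⁻¹).toReal with hff
    rcases eq_or_ne (omegaD d) 0 with hω | hω
    · simp [hω]
    · have hxn : ‖x‖ ≠ 0 := hxpos.ne'
      field_simp
  · -- side 2
    have hside2 := aux_side2 (rpw p (fun s : ℝ => s ^ ((d:ℝ)-1) * η s)) hfm hf0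
      ((A i + B i) / 2) ((A i + 3 * B i) / 4) (B i) hmq' hq'B
      (fun c e hc he => hfin c e (lt_of_lt_of_le hAm hc) he)
    have hD2 : ∀ᵐ t ∂(volume : Measure ℝ), t ∈ Set.Ioo ((A i + 3 * B i) / 4) (B i) →
        (HasDerivAt (fun u => ((∫⁻ s in Set.Ioo ((A i + B i) / 2) u,
            rpw p (fun s => s ^ ((d : ℝ) - 1) * η s) s)⁻¹).toReal)
          (-((rpw p (fun s : ℝ => s ^ ((d:ℝ)-1) * η s) t).toReal *
            (((∫⁻ s in Set.Ioo ((A i + B i) / 2) t,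
              rpw p (fun s => s ^ ((d : ℝ) - 1) * η s) s)⁻¹).toReal) ^ 2)) t
          ∧ 0 ≤ η t) := by
      filter_upwards [hside2, hη0] with t h1 h2 ht
      exact ⟨h1 ht, h2⟩
    have hnull2 := ae_iff.1 hD2
    obtain ⟨N₂, hN₂sup, hN₂m, hN₂0⟩ := exists_measurable_superset_of_null hnull2
    have hXnull : volume {x : Eucl d |
        ‖x‖ ∈ N₂ ∩ Set.Ioo ((A i + 3 * B i) / 4) (B i)} = 0 :=
      aux_norm_preimage_null d hd _ (B i)
        (hN₂m.inter measurableSet_Ioo)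
        (fun t ht => ⟨lt_trans hq'0 ht.2.1, ht.2.2⟩)
        (measure_mono_null Set.inter_subset_left hN₂0)
    rw [ae_iff]
    refine measure_mono_null ?_ hXnull
    intro x hx
    simp only [Set.mem_setOf_eq, Classical.not_imp] at hx
    obtain ⟨hxann, hxno⟩ := hx
    simp only [ann, Set.mem_setOf_eq] at hxann
    obtain ⟨hxI, hxl, hxr⟩ := hxann
    refine ⟨?_, hxl, hxr⟩
    by_contra hno
    apply hxno
    have hP : ‖x‖ ∈ Set.Ioo ((A i + 3 * B i) / 4) (B i) →
        (HasDerivAt (fun u => ((∫⁻ s in Set.Ioo ((A i + B i) / 2) u,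
            rpw p (fun s => s ^ ((d : ℝ) - 1) * η s) s)⁻¹).toReal)
          (-((rpw p (fun s : ℝ => s ^ ((d:ℝ)-1) * η s) ‖x‖).toReal *
            (((∫⁻ s in Set.Ioo ((A i + B i) / 2) ‖x‖,
              rpw p (fun s => s ^ ((d : ℝ) - 1) * η s) s)⁻¹).toReal) ^ 2)) ‖x‖
          ∧ 0 ≤ η ‖x‖) := by
      by_contra hc
      exact hno (hN₂sup hc)
    obtain ⟨hDer, hηx⟩ := hP ⟨hxl, hxr⟩
    have hxpos : 0 < ‖x‖ := lt_trans hq'0 hxl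
    have hx0 : x ≠ 0 := by
      intro h
      rw [h, norm_zero] at hxpos
      exact lt_irrefl _ hxpos
    have hnrm := aux_hasFDerivAt_norm (x := x) hx0
    have hcomp := hDer.comp_hasFDerivAt x hnrm
    have hmul := hcomp.const_mul ((omegaD d)⁻¹)
    have hev : what =ᶠ[𝓝 x] fun y : Eucl d => (omegaD d)⁻¹ *
        ((fun u => ((∫⁻ s in Set.Ioo ((A i + B i) / 2) u,
          rpw p (fun s => s ^ ((d : ℝ) - 1) * η s) s)⁻¹).toReal) ∘ fun y : Eucl d => ‖y‖) y := by
      have hopen : IsOpen {y : Eucl d | ‖y‖ ∈ Set.Ioo ((A i + 3 * B i) / 4) (B i)} :=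
        isOpen_Ioo.preimage continuous_norm
      filter_upwards [hopen.mem_nhds (show x ∈ _ from ⟨hxl, hxr⟩)] with y hy
      rw [hwhat y, hηhat i ‖y‖ ⟨le_trans hAm.le (le_trans hmq'.le hy.1.le), hy.2.le⟩]
      simp only [etaHatI, Function.comp]
      rw [if_neg (not_le.2 (lt_trans hqq' hy.1)), if_neg (not_le.2 hy.1)]
    refine ⟨_, hmul.congr_of_eventuallyEq hev, ?_⟩
    intro j
    rw [aux_eval, hw, hwhat, hηhat i ‖x‖ ⟨le_trans hAm.le (le_trans hmq'.le hxl.le), hxr.le⟩]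
    simp only [etaHatI]
    rw [if_neg (not_le.2 (lt_trans hqq' hxl)), if_neg (not_le.2 hxl), ← grel ‖x‖ hxpos hηx]
    set gg := (rpw p (fun s : ℝ => s ^ ((d:ℝ)-1) * η s) ‖x‖).toReal with hgg
    set ff := ((∫⁻ s in Set.Ioo ((A i + B i) / 2) ‖x‖,
      rpw p (fun s => s ^ ((d : ℝ) - 1) * η s) s)⁻¹).toReal with hff
    rcases eq_or_ne (omegaD d) 0 with hω | hω
    · simp [hω]
    · have hxn : ‖x‖ ≠ 0 := hxpos.ne'
      field_simp
end
end
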